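/- arXiv:0806.4404 — 7 statements merged into one kernel-verified Lean document; each statement's English description precedes it below -/
import Mathlib

section
/- For every real standardized matrix A with n ≥ 1 columns there exists a nonempty set τ of column indices such that |τ| ≥ st.rank(A) and the spectral norm of the column submatrix satisfies ‖A_τ‖ ≤ 15. -/
open Matrix

/-- Euclidean (ℓ2) norm of a finite real vector. -/
noncomputable def l2norm {ι : Type*} [Fintype ι] (v : ι → ℝ) : ℝ :=
  Real.sqrt (∑ i, v i ^ 2)

/-- ℓ1 norm of a finite real vector. -/
noncomputable def l1norm {ι : Type*} [Fintype ι] (v : ι → ℝ) : ℝ :=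
  ∑ i, |v i|

/-- ℓ∞ norm of a finite real vector. -/
noncomputable def linfnorm {ι : Type*} [Fintype ι] (v : ι → ℝ) : ℝ :=
  ⨆ i, |v i|

/-- Spectral (ℓ2→ℓ2 operator) norm of a real matrix. -/
noncomputable def specNorm {ι κ : Type*} [Fintype ι] [Fintype κ] (A : Matrix ι κ ℝ) : ℝ :=
  ⨆ x : {x : κ → ℝ // l2norm x = 1}, l2norm (A.mulVec x.1)

/-- Frobenius norm of a real matrix. -/
noncomputable def froNorm {ι κ : Type*} [Fintype ι] [Fintype κ] (A : Matrix ι κ ℝ) : ℝ :=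
  Real.sqrt (∑ i, ∑ j, A i j ^ 2)

/-- Stable rank: `‖A‖_F² / ‖A‖²`. -/
noncomputable def stRank {ι κ : Type*} [Fintype ι] [Fintype κ] (A : Matrix ι κ ℝ) : ℝ :=
  froNorm A ^ 2 / specNorm A ^ 2

/-- (∞,2) operator norm: `max{‖Ax‖₂ : ‖x‖_∞ = 1}`. -/
noncomputable def normInf2 {ι κ : Type*} [Fintype ι] [Fintype κ] (A : Matrix ι κ ℝ) : ℝ :=
  ⨆ x : {x : κ → ℝ // linfnorm x = 1}, l2norm (A.mulVec x.1)

/-- (∞,1) operator norm: `max{‖Ax‖₁ : ‖x‖_∞ = 1}`. -/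
noncomputable def normInf1 {ι κ : Type*} [Fintype ι] [Fintype κ] (A : Matrix ι κ ℝ) : ℝ :=
  ⨆ x : {x : κ → ℝ // linfnorm x = 1}, l1norm (A.mulVec x.1)

/-- Largest eigenvalue of a real symmetric matrix, as the maximal Rayleigh quotient. -/
noncomputable def lamMax {ι : Type*} [Fintype ι] (M : Matrix ι ι ℝ) : ℝ :=
  ⨆ x : {x : ι → ℝ // l2norm x = 1}, x.1 ⬝ᵥ M.mulVec x.1

section KTHelpers

variable {ι κ : Type*} [Fintype ι] [Fintype κ]

lemma KT.sum_sq_nonneg (v : ι → ℝ) : 0 ≤ ∑ i, v i ^ 2 :=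
  Finset.sum_nonneg fun _ _ => sq_nonneg _

lemma KT.l2norm_nonneg (v : ι → ℝ) : 0 ≤ l2norm v := Real.sqrt_nonneg _

lemma KT.l2norm_sq (v : ι → ℝ) : l2norm v ^ 2 = ∑ i, v i ^ 2 :=
  Real.sq_sqrt (KT.sum_sq_nonneg v)

lemma KT.sum_sq_eq_one {v : ι → ℝ} (h : l2norm v = 1) : ∑ i, v i ^ 2 = 1 := by
  have := KT.l2norm_sq v
  rw [h] at this
  simpa using this.symm

lemma KT.froNorm_nonneg (A : Matrix ι κ ℝ) : 0 ≤ froNorm A := Real.sqrt_nonneg _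

lemma KT.l2norm_mulVec_le (A : Matrix ι κ ℝ) (x : κ → ℝ) :
    l2norm (A.mulVec x) ≤ froNorm A * l2norm x := by
  have h1 : ∑ i, (A.mulVec x i) ^ 2 ≤ (∑ i, ∑ j, A i j ^ 2) * ∑ j, x j ^ 2 := by
    rw [Finset.sum_mul]
    apply Finset.sum_le_sum
    intro i _
    have : A.mulVec x i = ∑ j, A i j * x j := rfl
    rw [this]
    exact Finset.sum_mul_sq_le_sq_mul_sq Finset.univ (fun j => A i j) x
  calc l2norm (A.mulVec x) = Real.sqrt (∑ i, (A.mulVec x i) ^ 2) := rfl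
    _ ≤ Real.sqrt ((∑ i, ∑ j, A i j ^ 2) * ∑ j, x j ^ 2) := Real.sqrt_le_sqrt h1
    _ = froNorm A * l2norm x := by
        rw [Real.sqrt_mul (by positivity : (0:ℝ) ≤ ∑ i, ∑ j, A i j ^ 2)]
        rfl

lemma KT.specNorm_bddAbove (A : Matrix ι κ ℝ) :
    BddAbove (Set.range fun x : {x : κ → ℝ // l2norm x = 1} => l2norm (A.mulVec x.1)) := by
  refine ⟨froNorm A, ?_⟩
  rintro y ⟨x, rfl⟩
  have h := KT.l2norm_mulVec_le A x.1
  rwa [x.2, mul_one] at h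

lemma KT.le_specNorm (A : Matrix ι κ ℝ) (x : κ → ℝ) (hx : l2norm x = 1) :
    l2norm (A.mulVec x) ≤ specNorm A :=
  le_ciSup (KT.specNorm_bddAbove A) (⟨x, hx⟩ : {x : κ → ℝ // l2norm x = 1})

lemma KT.specNorm_nonneg (A : Matrix ι κ ℝ) : 0 ≤ specNorm A :=
  Real.iSup_nonneg fun x => KT.l2norm_nonneg _

lemma KT.specNorm_le_of_bound (A : Matrix ι κ ℝ) {c : ℝ} (hc : 0 ≤ c)
    (h : ∀ x : κ → ℝ, l2norm x = 1 → l2norm (A.mulVec x) ≤ c) : specNorm A ≤ c := by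
  rcases isEmpty_or_nonempty {x : κ → ℝ // l2norm x = 1} with he | hne
  · unfold specNorm
    rw [Real.iSup_of_isEmpty]
    exact hc
  · exact ciSup_le fun x => h x.1 x.2

lemma KT.specNorm_le_froNorm (A : Matrix ι κ ℝ) : specNorm A ≤ froNorm A :=
  KT.specNorm_le_of_bound A (KT.froNorm_nonneg A) fun x hx => by
    have h := KT.l2norm_mulVec_le A x
    rwa [hx, mul_one] at h

noncomputable def KT.unitVec [DecidableEq κ] (j : κ) : κ → ℝ := fun i => if i = j then 1 else 0

lemma KT.l2norm_unitVec [DecidableEq κ] (j : κ) : l2norm (KT.unitVec (κ := κ) j) = 1 := by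
  unfold l2norm KT.unitVec
  have : ∑ i, (if i = j then (1:ℝ) else 0) ^ 2 = 1 := by
    simp [apply_ite (· ^ 2)]
  rw [this, Real.sqrt_one]

lemma KT.mulVec_unitVec [DecidableEq κ] (A : Matrix ι κ ℝ) (j : κ) :
    A.mulVec (KT.unitVec j) = fun i => A i j := by
  funext i
  have : A.mulVec (KT.unitVec j) i = ∑ l, A i l * (if l = j then (1:ℝ) else 0) := rfl
  rw [this]
  simp

lemma KT.l2norm_zero : l2norm (0 : ι → ℝ) = 0 := by
  simp [l2norm]

lemma KT.l2norm_eq_zero {v : ι → ℝ} (h : l2norm v = 0) : v = 0 := by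
  have hsum : ∑ i, v i ^ 2 = 0 := by
    have := KT.l2norm_sq v
    rw [h] at this
    simpa using this.symm
  funext i
  have := (Finset.sum_eq_zero_iff_of_nonneg (fun i _ => sq_nonneg (v i))).mp hsum i
    (Finset.mem_univ i)
  exact pow_eq_zero_iff (n := 2) (by norm_num) |>.mp this

lemma KT.l2norm_smul (c : ℝ) (v : ι → ℝ) : l2norm (c • v) = |c| * l2norm v := by
  unfold l2norm
  have : ∑ i, (c • v) i ^ 2 = c ^ 2 * ∑ i, v i ^ 2 := by
    rw [Finset.mul_sum]
    exact Finset.sum_congr rfl fun i _ => by simp [mul_pow]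
  rw [this, Real.sqrt_mul (sq_nonneg c), Real.sqrt_sq_eq_abs]

lemma KT.dot_self_eq (v : ι → ℝ) : v ⬝ᵥ v = l2norm v ^ 2 := by
  rw [KT.l2norm_sq]
  exact Finset.sum_congr rfl fun i _ => by ring

lemma KT.dot_le (x y : ι → ℝ) : x ⬝ᵥ y ≤ l2norm x * l2norm y := by
  have hcs := Finset.sum_mul_sq_le_sq_mul_sq Finset.univ x y
  have h1 : x ⬝ᵥ y ≤ Real.sqrt ((x ⬝ᵥ y) ^ 2) := by
    rw [Real.sqrt_sq_eq_abs]
    exact le_abs_self _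
  calc x ⬝ᵥ y ≤ Real.sqrt ((x ⬝ᵥ y) ^ 2) := h1
    _ ≤ Real.sqrt ((∑ i, x i ^ 2) * ∑ i, y i ^ 2) := Real.sqrt_le_sqrt hcs
    _ = l2norm x * l2norm y := by
        rw [Real.sqrt_mul (KT.sum_sq_nonneg x)]
        rfl

lemma KT.l2norm_mulVec_le_spec (A : Matrix ι κ ℝ) (y : κ → ℝ) :
    l2norm (A.mulVec y) ≤ specNorm A * l2norm y := by
  by_cases h : l2norm y = 0
  · have hy : y = 0 := KT.l2norm_eq_zero h
    rw [hy, Matrix.mulVec_zero, KT.l2norm_zero, KT.l2norm_zero, mul_zero]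
  · have l2pos : 0 < l2norm y := lt_of_le_of_ne (KT.l2norm_nonneg y) (Ne.symm h)
    set c : ℝ := (l2norm y)⁻¹ with hc
    have hcpos : 0 < c := inv_pos.mpr l2pos
    have hx : l2norm (c • y) = 1 := by
      rw [KT.l2norm_smul, abs_of_pos hcpos, hc, inv_mul_cancel₀ h]
    have hb := KT.le_specNorm A (c • y) hx
    rw [Matrix.mulVec_smul, KT.l2norm_smul, abs_of_pos hcpos] at hb
    calc l2norm (A.mulVec y) = l2norm y * (c * l2norm (A.mulVec y)) := by
          rw [hc, ← mul_assoc, mul_inv_cancel₀ h, one_mul]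
      _ ≤ l2norm y * specNorm A := by
          exact mul_le_mul_of_nonneg_left hb l2pos.le
      _ = specNorm A * l2norm y := mul_comm _ _

end KTHelpers


section Barrier
variable {m : ℕ}

-- real conjTranspose = transpose
lemma rt (M : Matrix (Fin m) (Fin m) ℝ) : Mᴴ = Mᵀ := by
  ext i j; simp [Matrix.conjTranspose_apply]

lemma herm_of_transpose {M : Matrix (Fin m) (Fin m) ℝ} (h : Mᵀ = M) : M.IsHermitian := by
  unfold Matrix.IsHermitian; rw [rt]; exact h

lemma transpose_of_herm {M : Matrix (Fin m) (Fin m) ℝ} (h : M.IsHermitian) : Mᵀ = M := by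
  rw [← rt]; exact h

lemma symm_dot {M : Matrix (Fin m) (Fin m) ℝ} (hM : Mᵀ = M) (x y : Fin m → ℝ) :
    x ⬝ᵥ (M *ᵥ y) = (M *ᵥ x) ⬝ᵥ y := by
  rw [Matrix.dotProduct_mulVec, ← Matrix.mulVec_transpose, hM]

lemma dot_self_nonneg (x : Fin m → ℝ) : 0 ≤ x ⬝ᵥ x :=
  Finset.sum_nonneg fun i _ => mul_self_nonneg _

lemma dot_self_pos {x : Fin m → ℝ} (hx : x ≠ 0) : 0 < x ⬝ᵥ x := by
  obtain ⟨i, hi⟩ := Function.ne_iff.mp hx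
  apply Finset.sum_pos' (fun i _ => mul_self_nonneg _)
  exact ⟨i, Finset.mem_univ i, mul_self_pos.mpr hi⟩

end Barrier

section Barrier2
variable {m : ℕ}

lemma star_vec (x : Fin m → ℝ) : star x = x := by
  funext i; simp

lemma posdef_quad {M : Matrix (Fin m) (Fin m) ℝ} (hM : M.PosDef) {x : Fin m → ℝ} (hx : x ≠ 0) :
    0 < x ⬝ᵥ (M *ᵥ x) := by
  have := hM.dotProduct_mulVec_pos hx
  rwa [_root_.star_vec] at this

lemma psd_quad {M : Matrix (Fin m) (Fin m) ℝ} (hM : M.PosSemidef) (x : Fin m → ℝ) :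
    0 ≤ x ⬝ᵥ (M *ᵥ x) := by
  have := hM.dotProduct_mulVec_nonneg x
  rwa [_root_.star_vec] at this

lemma posdef_mk {M : Matrix (Fin m) (Fin m) ℝ} (h1 : Mᵀ = M)
    (h2 : ∀ x : Fin m → ℝ, x ≠ 0 → 0 < x ⬝ᵥ (M *ᵥ x)) : M.PosDef := by
  refine Matrix.PosDef.of_dotProduct_mulVec_pos (herm_of_transpose h1) fun x hx => ?_
  rw [_root_.star_vec]
  exact h2 x hx

/-- Cauchy–Schwarz for a positive semidefinite form. -/
lemma psd_cs {M : Matrix (Fin m) (Fin m) ℝ} (hM : M.PosSemidef) (x y : Fin m → ℝ) :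
    (x ⬝ᵥ (M *ᵥ y)) ^ 2 ≤ (x ⬝ᵥ (M *ᵥ x)) * (y ⬝ᵥ (M *ᵥ y)) := by
  have hsym : Mᵀ = M := transpose_of_herm hM.1
  have key : ∀ t : ℝ, 0 ≤ (y ⬝ᵥ (M *ᵥ y)) * (t * t) + (2 * (x ⬝ᵥ (M *ᵥ y))) * t
      + (x ⬝ᵥ (M *ᵥ x)) := by
    intro t
    have h0 := psd_quad hM (x + t • y)
    have e1 : (x + t • y) ⬝ᵥ (M *ᵥ (x + t • y))
        = x ⬝ᵥ (M *ᵥ x) + t * (x ⬝ᵥ (M *ᵥ y)) + t * (y ⬝ᵥ (M *ᵥ x))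
          + t * t * (y ⬝ᵥ (M *ᵥ y)) := by
      simp only [Matrix.mulVec_add, Matrix.mulVec_smul, dotProduct_add, add_dotProduct,
        dotProduct_smul, smul_dotProduct, smul_eq_mul]
      ring
    have e2 : y ⬝ᵥ (M *ᵥ x) = x ⬝ᵥ (M *ᵥ y) := by
      rw [symm_dot hsym y x, dotProduct_comm]
    rw [e1, e2] at h0
    nlinarith [h0]
  have hd := discrim_le_zero key
  unfold discrim at hd
  nlinarith [hd]

lemma outer_mulVec (a b x : Fin m → ℝ) : (vecMulVec a b) *ᵥ x = (b ⬝ᵥ x) • a := by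
  funext i
  simp only [Matrix.mulVec, Matrix.vecMulVec_apply, dotProduct, Pi.smul_apply,
    smul_eq_mul, Finset.sum_mul]
  exact Finset.sum_congr rfl fun j _ => by ring

end Barrier2

section Barrier3
variable {m : ℕ}

lemma outer_transpose (a b : Fin m → ℝ) : (vecMulVec a b)ᵀ = vecMulVec b a := by
  ext i j
  simp [Matrix.vecMulVec_apply, mul_comm]

lemma quad_outer (a x : Fin m → ℝ) : x ⬝ᵥ ((vecMulVec a a) *ᵥ x) = (a ⬝ᵥ x) ^ 2 := by
  rw [outer_mulVec, dotProduct_smul, smul_eq_mul, dotProduct_comm]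
  ring

lemma mul_outer (M : Matrix (Fin m) (Fin m) ℝ) (a b : Fin m → ℝ) :
    M * vecMulVec a b = vecMulVec (M *ᵥ a) b := by
  ext i j
  simp only [Matrix.mul_apply, Matrix.vecMulVec_apply, Matrix.mulVec, dotProduct,
    Finset.sum_mul]
  exact Finset.sum_congr rfl fun k _ => by ring

lemma outer_mul (a b : Fin m → ℝ) (M : Matrix (Fin m) (Fin m) ℝ) :
    vecMulVec a b * M = vecMulVec a (Mᵀ *ᵥ b) := by
  ext i j
  simp only [Matrix.mul_apply, Matrix.vecMulVec_apply, Matrix.mulVec, dotProduct,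
    Matrix.transpose_apply, Finset.mul_sum]
  exact Finset.sum_congr rfl fun k _ => by ring

lemma outer_outer (a b c d : Fin m → ℝ) :
    vecMulVec a b * vecMulVec c d = (b ⬝ᵥ c) • vecMulVec a d := by
  ext i j
  simp only [Matrix.mul_apply, Matrix.vecMulVec_apply, Matrix.smul_apply, dotProduct,
    smul_eq_mul, Finset.sum_mul]
  exact Finset.sum_congr rfl fun k _ => by ring

lemma posdef_smul_one {c : ℝ} (hc : 0 < c) :
    (c • (1 : Matrix (Fin m) (Fin m) ℝ)).PosDef := by
  apply posdef_mk
  · rw [Matrix.transpose_smul, Matrix.transpose_one]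
  · intro x hx
    rw [Matrix.smul_mulVec, Matrix.one_mulVec, dotProduct_smul, smul_eq_mul]
    exact mul_pos hc (dot_self_pos hx)

lemma posdef_isUnit_det {B : Matrix (Fin m) (Fin m) ℝ} (hB : B.PosDef) : IsUnit B.det :=
  isUnit_iff_ne_zero.mpr hB.det_pos.ne'

lemma posdef_mul_inv {B : Matrix (Fin m) (Fin m) ℝ} (hB : B.PosDef) : B * B⁻¹ = 1 :=
  Matrix.mul_nonsing_inv _ (posdef_isUnit_det hB)

lemma posdef_inv_mul {B : Matrix (Fin m) (Fin m) ℝ} (hB : B.PosDef) : B⁻¹ * B = 1 :=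
  Matrix.nonsing_inv_mul _ (posdef_isUnit_det hB)

lemma inv_symm {B : Matrix (Fin m) (Fin m) ℝ} (hB : B.PosDef) : (B⁻¹)ᵀ = B⁻¹ := by
  rw [Matrix.transpose_nonsing_inv, transpose_of_herm hB.1]

lemma posdef_inv {B : Matrix (Fin m) (Fin m) ℝ} (hB : B.PosDef) : (B⁻¹).PosDef := hB.inv

/-- Sherman–Morrison. -/
lemma sherman {C : Matrix (Fin m) (Fin m) ℝ} (hC : C.PosDef) (v : Fin m → ℝ)
    (hq : v ⬝ᵥ (C⁻¹ *ᵥ v) ≠ 1) :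
    (C - vecMulVec v v)⁻¹
      = C⁻¹ + (1 - v ⬝ᵥ (C⁻¹ *ᵥ v))⁻¹ • vecMulVec (C⁻¹ *ᵥ v) (C⁻¹ *ᵥ v) := by
  set q : ℝ := v ⬝ᵥ (C⁻¹ *ᵥ v) with hq_def
  set c : ℝ := (1 - q)⁻¹ with hc_def
  set w : Fin m → ℝ := C⁻¹ *ᵥ v with hw_def
  have h1q : (1 : ℝ) - q ≠ 0 := sub_ne_zero_of_ne (Ne.symm hq)
  apply Matrix.inv_eq_right_inv
  have hCw : C *ᵥ w = v := by
    rw [hw_def, Matrix.mulVec_mulVec, posdef_mul_inv hC, Matrix.one_mulVec]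
  have h1 : C * vecMulVec w w = vecMulVec v w := by
    rw [mul_outer, hCw]
  have h2 : vecMulVec v v * C⁻¹ = vecMulVec v w := by
    rw [outer_mul, inv_symm hC]
  have h3 : vecMulVec v v * vecMulVec w w = q • vecMulVec v w := by
    rw [outer_outer]
  have expand : (C - vecMulVec v v) * (C⁻¹ + c • vecMulVec w w)
      = 1 + (c • vecMulVec v w - vecMulVec v w - (c * q) • vecMulVec v w) := by
    rw [Matrix.sub_mul, Matrix.mul_add, Matrix.mul_add, Matrix.mul_smul, Matrix.mul_smul,
      posdef_mul_inv hC, h1, h2, h3, smul_smul]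
    abel
  rw [expand]
  have hcoef : c • vecMulVec v w - vecMulVec v w - (c * q) • vecMulVec v w
      = ((c - 1) - c * q) • vecMulVec v w := by
    rw [sub_smul, sub_smul, one_smul]
  have hzero : (c - 1) - c * q = 0 := by
    rw [hc_def]
    field_simp
    ring
  rw [hcoef, hzero, zero_smul, add_zero]

end Barrier3

section Barrier4
variable {m : ℕ}

lemma posdef_sub_outer {C : Matrix (Fin m) (Fin m) ℝ} (hC : C.PosDef) {v : Fin m → ℝ}
    (hq : v ⬝ᵥ (C⁻¹ *ᵥ v) < 1) : (C - vecMulVec v v).PosDef := by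
  have hsym : Cᵀ = C := transpose_of_herm hC.1
  apply posdef_mk
  · rw [Matrix.transpose_sub, hsym, outer_transpose]
  · intro x hx
    have hxx : 0 < x ⬝ᵥ (C *ᵥ x) := posdef_quad hC hx
    have hq0 : x ⬝ᵥ ((C - vecMulVec v v) *ᵥ x) = x ⬝ᵥ (C *ᵥ x) - (v ⬝ᵥ x) ^ 2 := by
      rw [Matrix.sub_mulVec, dotProduct_sub, quad_outer]
    have hvx : v ⬝ᵥ x = (C⁻¹ *ᵥ v) ⬝ᵥ (C *ᵥ x) := by
      have : C *ᵥ (C⁻¹ *ᵥ v) = v := by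
        rw [Matrix.mulVec_mulVec, posdef_mul_inv hC, Matrix.one_mulVec]
      rw [symm_dot hsym (C⁻¹ *ᵥ v) x, this]
    have hcs := psd_cs hC.posSemidef (C⁻¹ *ᵥ v) x
    have hwCw : (C⁻¹ *ᵥ v) ⬝ᵥ (C *ᵥ (C⁻¹ *ᵥ v)) = v ⬝ᵥ (C⁻¹ *ᵥ v) := by
      rw [Matrix.mulVec_mulVec, posdef_mul_inv hC, Matrix.one_mulVec, dotProduct_comm]
    rw [hwCw] at hcs
    rw [hq0, hvx]
    nlinarith [hcs, hxx]

variable {B : Matrix (Fin m) (Fin m) ℝ} {δ : ℝ}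

lemma posdef_shift (hB : B.PosDef) (hδ : 0 < δ) :
    (B + δ • (1 : Matrix (Fin m) (Fin m) ℝ)).PosDef :=
  hB.add_posSemidef (posdef_smul_one hδ).posSemidef

lemma shift_comm (hB : B.PosDef) (hδ : 0 < δ) :
    (B + δ • (1 : Matrix (Fin m) (Fin m) ℝ))⁻¹ * B⁻¹ = B⁻¹ * (B + δ • 1)⁻¹ := by
  set C := B + δ • (1 : Matrix (Fin m) (Fin m) ℝ) with hCdef
  have hBC : B * C = C * B := by
    rw [hCdef, Matrix.mul_add, Matrix.add_mul, Matrix.mul_smul, Matrix.smul_mul, mul_one,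
      one_mul]
  calc C⁻¹ * B⁻¹ = (B * C)⁻¹ := by rw [Matrix.mul_inv_rev]
    _ = (C * B)⁻¹ := by rw [hBC]
    _ = B⁻¹ * C⁻¹ := by rw [Matrix.mul_inv_rev]

lemma resolvent1 (hB : B.PosDef) (hδ : 0 < δ) :
    B⁻¹ - (B + δ • (1 : Matrix (Fin m) (Fin m) ℝ))⁻¹
      = δ • ((B + δ • 1)⁻¹ * B⁻¹) := by
  set C := B + δ • (1 : Matrix (Fin m) (Fin m) ℝ) with hCdef
  have hC : C.PosDef := posdef_shift hB hδ
  have key : B⁻¹ * (C - B) * C⁻¹ = B⁻¹ - C⁻¹ := by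
    rw [Matrix.mul_sub, Matrix.sub_mul, Matrix.mul_assoc, posdef_mul_inv hC,
      posdef_inv_mul hB, mul_one, Matrix.one_mul]
  have hCB : C - B = δ • (1 : Matrix (Fin m) (Fin m) ℝ) := by
    rw [hCdef]; abel
  rw [← key, hCB, Matrix.mul_smul, Matrix.mul_one, Matrix.smul_mul, ← shift_comm hB hδ]

lemma resolvent2 (hB : B.PosDef) (hδ : 0 < δ) :
    B⁻¹ - (B + δ • (1 : Matrix (Fin m) (Fin m) ℝ))⁻¹
      = δ • ((B + δ • 1)⁻¹ * (B + δ • 1)⁻¹)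
        + (δ * δ) • ((B + δ • 1)⁻¹ * (B⁻¹ * (B + δ • 1)⁻¹)) := by
  set C := B + δ • (1 : Matrix (Fin m) (Fin m) ℝ) with hCdef
  have h1 := resolvent1 hB hδ
  have hBinv : B⁻¹ = C⁻¹ + δ • (C⁻¹ * B⁻¹) := by
    rw [← h1]; abel
  calc B⁻¹ - C⁻¹ = δ • (C⁻¹ * B⁻¹) := h1
    _ = δ • (C⁻¹ * (C⁻¹ + δ • (C⁻¹ * B⁻¹))) := by rw [← hBinv]
    _ = δ • (C⁻¹ * C⁻¹) + (δ * δ) • (C⁻¹ * (C⁻¹ * B⁻¹)) := by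
        rw [Matrix.mul_add, Matrix.mul_smul, smul_add, smul_smul]
    _ = δ • (C⁻¹ * C⁻¹) + (δ * δ) • (C⁻¹ * (B⁻¹ * C⁻¹)) := by
        rw [shift_comm hB hδ]

lemma quad_diff (hB : B.PosDef) (hδ : 0 < δ) (x : Fin m → ℝ) :
    x ⬝ᵥ (B⁻¹ *ᵥ x) - x ⬝ᵥ ((B + δ • (1 : Matrix (Fin m) (Fin m) ℝ))⁻¹ *ᵥ x)
      = δ * (((B + δ • 1)⁻¹ *ᵥ x) ⬝ᵥ ((B + δ • 1)⁻¹ *ᵥ x))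
        + (δ * δ) * (((B + δ • 1)⁻¹ *ᵥ x) ⬝ᵥ (B⁻¹ *ᵥ ((B + δ • 1)⁻¹ *ᵥ x))) := by
  set C := B + δ • (1 : Matrix (Fin m) (Fin m) ℝ) with hCdef
  have hC : C.PosDef := posdef_shift hB hδ
  have hinvsym : (C⁻¹)ᵀ = C⁻¹ := inv_symm hC
  have h2 := resolvent2 hB hδ
  have lhs_eq : x ⬝ᵥ (B⁻¹ *ᵥ x) - x ⬝ᵥ (C⁻¹ *ᵥ x) = x ⬝ᵥ ((B⁻¹ - C⁻¹) *ᵥ x) := by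
    rw [Matrix.sub_mulVec, dotProduct_sub]
  rw [lhs_eq, h2]
  rw [Matrix.add_mulVec, dotProduct_add, Matrix.smul_mulVec, Matrix.smul_mulVec,
    dotProduct_smul, dotProduct_smul]
  congr 1
  · rw [smul_eq_mul]
    congr 1
    rw [← Matrix.mulVec_mulVec]
    exact symm_dot hinvsym x (C⁻¹ *ᵥ x)
  · rw [smul_eq_mul]
    congr 1
    rw [← Matrix.mulVec_mulVec, ← Matrix.mulVec_mulVec]
    exact symm_dot hinvsym x (B⁻¹ *ᵥ (C⁻¹ *ᵥ x))

end Barrier4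

section Barrier5

/-- One step of the barrier greedy selection. -/
lemma barrier_step {m n : ℕ} (a : Fin n → Fin m → ℝ) (s δ : ℝ) (hδ : 0 < δ)
    (hW : ∀ v : Fin m → ℝ, (∑ l, (a l ⬝ᵥ v) ^ 2) ≤ s ^ 2 * (v ⬝ᵥ v))
    (hex : ∃ l, a l ≠ 0)
    (B : Matrix (Fin m) (Fin m) ℝ) (hB : B.PosDef) (T : Finset (Fin n))
    (hcard : s ^ 2 / δ + (∑ l, a l ⬝ᵥ (B⁻¹ *ᵥ a l)) < (n : ℝ) - T.card) :
    ∃ j ∉ T,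
      (B + δ • (1 : Matrix (Fin m) (Fin m) ℝ) - vecMulVec (a j) (a j)).PosDef ∧
      (∑ l, a l ⬝ᵥ ((B + δ • (1 : Matrix (Fin m) (Fin m) ℝ) - vecMulVec (a j) (a j))⁻¹ *ᵥ a l))
        ≤ ∑ l, a l ⬝ᵥ (B⁻¹ *ᵥ a l) := by
  classical
  set C := B + δ • (1 : Matrix (Fin m) (Fin m) ℝ) with hCdef
  have hC : C.PosDef := posdef_shift hB hδ
  set w : Fin n → Fin m → ℝ := fun l => C⁻¹ *ᵥ a l with hwdef
  set q : Fin n → ℝ := fun j => a j ⬝ᵥ (C⁻¹ *ᵥ a j) with hqdef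
  set p : Fin n → ℝ := fun j => ∑ l, (a l ⬝ᵥ w j) ^ 2 with hpdef
  set T₂ : ℝ := ∑ l, (w l) ⬝ᵥ (w l) with hT2def
  set ΦB : ℝ := ∑ l, a l ⬝ᵥ (B⁻¹ *ᵥ a l) with hPBdef
  set ΦC : ℝ := ∑ l, a l ⬝ᵥ (C⁻¹ *ᵥ a l) with hPCdef
  -- each difference term
  have hdiff : ∀ l, a l ⬝ᵥ (B⁻¹ *ᵥ a l) - a l ⬝ᵥ (C⁻¹ *ᵥ a l)
      = δ * (w l ⬝ᵥ w l) + (δ * δ) * (w l ⬝ᵥ (B⁻¹ *ᵥ w l)) := fun l => quad_diff hB hδ (a l)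
  have hBinvpsd : (B⁻¹).PosSemidef := (posdef_inv hB).posSemidef
  have hCinvpsd : (C⁻¹).PosSemidef := (posdef_inv hC).posSemidef
  have hΔΦ : δ * T₂ ≤ ΦB - ΦC := by
    have : ΦB - ΦC = ∑ l, (a l ⬝ᵥ (B⁻¹ *ᵥ a l) - a l ⬝ᵥ (C⁻¹ *ᵥ a l)) := by
      rw [hPBdef, hPCdef, Finset.sum_sub_distrib]
    rw [this, hT2def, Finset.mul_sum]
    apply Finset.sum_le_sum
    intro l _
    rw [hdiff l]
    have := psd_quad hBinvpsd (w l)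
    nlinarith
  have hT2pos : 0 < T₂ := by
    obtain ⟨l0, hl0⟩ := hex
    have hwl0 : w l0 ≠ 0 := by
      intro h0
      apply hl0
      have : C *ᵥ (w l0) = a l0 := by
        rw [hwdef]
        rw [Matrix.mulVec_mulVec, posdef_mul_inv hC, Matrix.one_mulVec]
      rw [h0, Matrix.mulVec_zero] at this
      exact this.symm
    rw [hT2def]
    apply Finset.sum_pos' (fun l _ => dot_self_nonneg (w l))
    exact ⟨l0, Finset.mem_univ l0, dot_self_pos hwl0⟩
  have hΔΦpos : 0 < ΦB - ΦC := lt_of_lt_of_le (mul_pos hδ hT2pos) hΔΦ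
  have hqnonneg : ∀ j, 0 ≤ q j := fun j => psd_quad hCinvpsd (a j)
  have hpnonneg : ∀ j, 0 ≤ p j := fun j => Finset.sum_nonneg fun l _ => sq_nonneg _
  have hsump : (∑ j, p j) ≤ s ^ 2 * T₂ := by
    rw [hpdef, hT2def, Finset.mul_sum]
    exact Finset.sum_le_sum fun j _ => hW (w j)
  -- find a good index outside T
  have hgood : ∃ j ∉ T, p j / (ΦB - ΦC) + q j < 1 := by
    by_contra hcon
    push_neg at hcon
    have hub : ((Tᶜ.card : ℝ)) ≤ ∑ j ∈ Tᶜ, (p j / (ΦB - ΦC) + q j) := by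
      have h1 : ∀ j ∈ Tᶜ, (1 : ℝ) ≤ p j / (ΦB - ΦC) + q j := fun j hj =>
        hcon j (Finset.mem_compl.mp hj)
      calc ((Tᶜ.card : ℝ)) = ∑ _j ∈ Tᶜ, (1 : ℝ) := by rw [Finset.sum_const, nsmul_eq_mul, mul_one]
        _ ≤ _ := Finset.sum_le_sum h1
    have hsplit : ∑ j ∈ Tᶜ, (p j / (ΦB - ΦC) + q j)
        = (∑ j ∈ Tᶜ, p j) / (ΦB - ΦC) + ∑ j ∈ Tᶜ, q j := by
      rw [Finset.sum_add_distrib, Finset.sum_div]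
    have hp_le : (∑ j ∈ Tᶜ, p j) ≤ ∑ j, p j :=
      Finset.sum_le_sum_of_subset_of_nonneg (Finset.subset_univ _) fun j _ _ => hpnonneg j
    have hq_le : (∑ j ∈ Tᶜ, q j) ≤ ΦC := by
      rw [hPCdef]
      exact Finset.sum_le_sum_of_subset_of_nonneg (Finset.subset_univ _)
        fun j _ _ => hqnonneg j
    have hptot : (∑ j ∈ Tᶜ, p j) / (ΦB - ΦC) ≤ s ^ 2 / δ := by
      have h1 : (∑ j ∈ Tᶜ, p j) / (ΦB - ΦC) ≤ (s ^ 2 * T₂) / (δ * T₂) := by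
        apply div_le_div₀ (by positivity) (le_trans hp_le hsump) (mul_pos hδ hT2pos) hΔΦ
      rwa [mul_div_mul_right _ _ hT2pos.ne'] at h1
    have hΦC_le : ΦC ≤ ΦB := by linarith
    have hcards : ((Tᶜ.card : ℝ)) = (n : ℝ) - T.card := by
      rw [Finset.card_compl, Fintype.card_fin]
      have := Finset.card_le_univ T
      push_cast [Nat.cast_sub (by simpa using this)]
      ring
    have : (n : ℝ) - T.card ≤ s ^ 2 / δ + ΦB := by
      calc (n : ℝ) - T.card = (Tᶜ.card : ℝ) := hcards.symm
        _ ≤ (∑ j ∈ Tᶜ, p j) / (ΦB - ΦC) + ∑ j ∈ Tᶜ, q j := by rw [← hsplit]; exact hub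
        _ ≤ s ^ 2 / δ + ΦB := add_le_add hptot (le_trans hq_le hΦC_le)
    exact absurd hcard (not_lt.mpr this)
  obtain ⟨j, hjT, hjlt⟩ := hgood
  have hq1 : q j < 1 := by
    have h0 : 0 ≤ p j / (ΦB - ΦC) := div_nonneg (hpnonneg j) hΔΦpos.le
    linarith
  refine ⟨j, hjT, posdef_sub_outer hC hq1, ?_⟩
  have hqne : a j ⬝ᵥ (C⁻¹ *ᵥ a j) ≠ 1 := ne_of_lt hq1
  rw [show B + δ • (1 : Matrix (Fin m) (Fin m) ℝ) - vecMulVec (a j) (a j)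
      = C - vecMulVec (a j) (a j) from rfl]
  rw [sherman hC (a j) hqne]
  have hterm : ∀ l, a l ⬝ᵥ ((C⁻¹ + (1 - q j)⁻¹ • vecMulVec (w j) (w j)) *ᵥ a l)
      = a l ⬝ᵥ (C⁻¹ *ᵥ a l) + (1 - q j)⁻¹ * (a l ⬝ᵥ w j) ^ 2 := by
    intro l
    rw [Matrix.add_mulVec, dotProduct_add, Matrix.smul_mulVec, dotProduct_smul,
      smul_eq_mul, quad_outer, dotProduct_comm (w j) (a l)]
  calc (∑ l, a l ⬝ᵥ ((C⁻¹ + (1 - q j)⁻¹ • vecMulVec (w j) (w j)) *ᵥ a l))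
      = ΦC + (1 - q j)⁻¹ * p j := by
        rw [Finset.sum_congr rfl fun l _ => hterm l, Finset.sum_add_distrib, ← Finset.mul_sum,
          hPCdef]
    _ ≤ ΦB := by
        have h1q : 0 < 1 - q j := by linarith
        have hplt : p j < (1 - q j) * (ΦB - ΦC) := by
          have := (div_lt_iff₀ hΔΦpos).mp (by linarith : p j / (ΦB - ΦC) < 1 - q j)
          linarith [this]
        have : (1 - q j)⁻¹ * p j ≤ ΦB - ΦC := by
          rw [inv_mul_le_iff₀ h1q]
          nlinarith
        linarith

end Barrier5

section Barrier6

lemma barrier_select {m n : ℕ} (a : Fin n → Fin m → ℝ) (s δ : ℝ) (hδ : 0 < δ)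
    (hW : ∀ v : Fin m → ℝ, (∑ l, (a l ⬝ᵥ v) ^ 2) ≤ s ^ 2 * (v ⬝ᵥ v))
    (hex : ∃ l, a l ≠ 0)
    (hunit : ∀ l, a l ⬝ᵥ a l = 1)
    (k : ℕ) (hcount : ∀ t : ℕ, t < k → s ^ 2 / δ + (n : ℝ) / 2 < (n : ℝ) - t) :
    ∃ T : Finset (Fin n), T.card = k ∧
      ((2 + k * δ) • (1 : Matrix (Fin m) (Fin m) ℝ)
        - ∑ j ∈ T, vecMulVec (a j) (a j)).PosDef ∧
      (∑ l, a l ⬝ᵥ (((2 + k * δ) • (1 : Matrix (Fin m) (Fin m) ℝ)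
        - ∑ j ∈ T, vecMulVec (a j) (a j))⁻¹ *ᵥ a l)) ≤ (n : ℝ) / 2 := by
  classical
  induction k with
  | zero =>
    refine ⟨∅, rfl, ?_, ?_⟩
    · simp only [Finset.sum_empty, Nat.cast_zero, zero_mul, add_zero, sub_zero]
      exact posdef_smul_one (by norm_num)
    · have hinv : (((2 : ℝ) + (0 : ℕ) * δ) • (1 : Matrix (Fin m) (Fin m) ℝ))⁻¹
          = (2⁻¹ : ℝ) • (1 : Matrix (Fin m) (Fin m) ℝ) := by
        apply Matrix.inv_eq_right_inv
        rw [Matrix.smul_mul, Matrix.mul_smul, one_mul, smul_smul]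
        norm_num
      simp only [Finset.sum_empty, sub_zero]
      rw [hinv]
      have : ∀ l, a l ⬝ᵥ (((2⁻¹ : ℝ) • (1 : Matrix (Fin m) (Fin m) ℝ)) *ᵥ a l)
          = 2⁻¹ := by
        intro l
        rw [Matrix.smul_mulVec, Matrix.one_mulVec, dotProduct_smul, smul_eq_mul,
          hunit l, mul_one]
      rw [Finset.sum_congr rfl fun l _ => this l, Finset.sum_const, Finset.card_univ,
        Fintype.card_fin, nsmul_eq_mul]
      apply le_of_eq
      ring
  | succ t ih =>
    obtain ⟨T, hTcard, hTpos, hTΦ⟩ := ih (fun i hi => hcount i (Nat.lt_succ_of_lt hi))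
    set B := (2 + (t : ℕ) * δ) • (1 : Matrix (Fin m) (Fin m) ℝ)
      - ∑ j ∈ T, vecMulVec (a j) (a j) with hBdef
    have hcard : s ^ 2 / δ + (∑ l, a l ⬝ᵥ (B⁻¹ *ᵥ a l)) < (n : ℝ) - T.card := by
      have h1 := hcount t (Nat.lt_succ_self t)
      rw [hTcard]
      linarith
    obtain ⟨j, hjT, hjpos, hjΦ⟩ := barrier_step a s δ hδ hW hex B hTpos T hcard
    refine ⟨insert j T, ?_, ?_, ?_⟩
    · rw [Finset.card_insert_of_notMem hjT, hTcard]
    · have hmat : (2 + ((t + 1 : ℕ) : ℝ) * δ) • (1 : Matrix (Fin m) (Fin m) ℝ)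
          - ∑ i ∈ insert j T, vecMulVec (a i) (a i)
          = B + δ • (1 : Matrix (Fin m) (Fin m) ℝ) - vecMulVec (a j) (a j) := by
        rw [Finset.sum_insert hjT, hBdef]
        have hco : (2 + ((t + 1 : ℕ) : ℝ) * δ) = (2 + (t : ℕ) * δ) + δ := by
          push_cast; ring
        rw [hco, add_smul]
        abel
      rw [hmat]
      exact hjpos
    · have hmat : (2 + ((t + 1 : ℕ) : ℝ) * δ) • (1 : Matrix (Fin m) (Fin m) ℝ)
          - ∑ i ∈ insert j T, vecMulVec (a i) (a i)
          = B + δ • (1 : Matrix (Fin m) (Fin m) ℝ) - vecMulVec (a j) (a j) := by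
        rw [Finset.sum_insert hjT, hBdef]
        have hco : (2 + ((t + 1 : ℕ) : ℝ) * δ) = (2 + (t : ℕ) * δ) + δ := by
          push_cast; ring
        rw [hco, add_smul]
        abel
      rw [hmat]
      exact le_trans hjΦ hTΦ

end Barrier6

section KTHard

/-- Quadratic form of a sum of outer products. -/
lemma quad_sum_outer {m n : ℕ} (a : Fin n → Fin m → ℝ) (T : Finset (Fin n)) (y : Fin m → ℝ) :
    y ⬝ᵥ ((∑ j ∈ T, vecMulVec (a j) (a j)) *ᵥ y) = ∑ j ∈ T, (a j ⬝ᵥ y) ^ 2 := by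
  have hmv : (∑ j ∈ T, vecMulVec (a j) (a j)) *ᵥ y
      = ∑ j ∈ T, ((vecMulVec (a j) (a j)) *ᵥ y) := by
    funext i
    simp only [Matrix.mulVec, dotProduct, Finset.sum_apply, Matrix.sum_apply,
      Finset.sum_mul]
    rw [Finset.sum_comm]
  rw [hmv]
  rw [show y ⬝ᵥ (∑ j ∈ T, ((vecMulVec (a j) (a j)) *ᵥ y))
      = ∑ j ∈ T, y ⬝ᵥ ((vecMulVec (a j) (a j)) *ᵥ y) by
    simp only [dotProduct, Finset.sum_apply, Finset.mul_sum]
    rw [Finset.sum_comm]]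
  exact Finset.sum_congr rfl fun j _ => quad_outer (a j) y

/-- The hard case of Kashin–Tzafriri, via the barrier greedy selection. -/
lemma KT.hard {m n : ℕ} (hn : 1 ≤ n) (A : Matrix (Fin m) (Fin n) ℝ)
    (hA : ∀ j, l2norm (fun i => A i j) = 1) (hs : 15 < specNorm A) :
    ∃ τ : Finset (Fin n), τ.Nonempty ∧ stRank A ≤ (τ.card : ℝ) ∧
      specNorm (A.submatrix id (fun j : τ => (j : Fin n))) ≤ 15 := by
  classical
  set s : ℝ := specNorm A with hs_def
  have hspos : 0 < s := lt_trans (by norm_num) hs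
  have hnpos : (0 : ℝ) < n := by exact_mod_cast hn
  set a : Fin n → Fin m → ℝ := fun j i => A i j with ha_def
  have hunit : ∀ l, a l ⬝ᵥ a l = 1 := by
    intro l
    have h1 : ∑ i, (a l i) ^ 2 = 1 := KT.sum_sq_eq_one (hA l)
    rw [← h1]
    exact Finset.sum_congr rfl fun i _ => by ring
  have hex : ∃ l, a l ≠ 0 := by
    refine ⟨⟨0, hn⟩, fun h0 => ?_⟩
    have := hunit ⟨0, hn⟩
    rw [h0] at this
    simp at this
  have hfro : froNorm A ^ 2 = n := by
    have hsum : ∑ i, ∑ j, A i j ^ 2 = (n : ℝ) := by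
      rw [Finset.sum_comm]
      have h1 : ∀ j : Fin n, (∑ i, A i j ^ 2) = 1 := fun j => KT.sum_sq_eq_one (hA j)
      simp [h1]
    rw [froNorm, Real.sq_sqrt (by positivity), hsum]
  have hs2n : s ^ 2 ≤ (n : ℝ) := by
    have h1 : s ≤ froNorm A := KT.specNorm_le_froNorm A
    have h2 : s ^ 2 ≤ froNorm A ^ 2 :=
      pow_le_pow_left₀ (KT.specNorm_nonneg A) h1 2
    rw [hfro] at h2
    exact h2
  -- the `W ⪯ s² I` bound
  have hW : ∀ v : Fin m → ℝ, (∑ l, (a l ⬝ᵥ v) ^ 2) ≤ s ^ 2 * (v ⬝ᵥ v) := by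
    intro v
    have hAv : (fun l => a l ⬝ᵥ v) = Aᵀ.mulVec v := by
      funext l
      simp only [Matrix.mulVec, dotProduct, Matrix.transpose_apply]
      rfl
    have hL : ∑ l, (a l ⬝ᵥ v) ^ 2 = l2norm (Aᵀ.mulVec v) ^ 2 := by
      rw [KT.l2norm_sq]
      exact Finset.sum_congr rfl fun l _ => by rw [congrFun hAv l]
    set L : ℝ := l2norm (Aᵀ.mulVec v) with hL_def
    have hdotform : L ^ 2 = v ⬝ᵥ (A.mulVec (Aᵀ.mulVec v)) := by
      rw [hL_def, ← KT.dot_self_eq, Matrix.dotProduct_mulVec, ← Matrix.mulVec_transpose,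
        Matrix.transpose_transpose]
      exact dotProduct_comm _ _
    have hkey : L ^ 2 ≤ l2norm v * (s * L) := by
      rw [hdotform]
      calc v ⬝ᵥ (A.mulVec (Aᵀ.mulVec v))
          ≤ l2norm v * l2norm (A.mulVec (Aᵀ.mulVec v)) := KT.dot_le _ _
        _ ≤ l2norm v * (s * l2norm (Aᵀ.mulVec v)) := by
            apply mul_le_mul_of_nonneg_left (KT.l2norm_mulVec_le_spec A _)
              (KT.l2norm_nonneg v)
    have hLnn : 0 ≤ L := KT.l2norm_nonneg _
    have hvnn : 0 ≤ l2norm v := KT.l2norm_nonneg _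
    have hL_le : L ≤ s * l2norm v := by
      rcases eq_or_lt_of_le hLnn with h0 | h0
      · rw [← h0]; positivity
      · have := hkey
        nlinarith
    rw [hL, KT.dot_self_eq]
    calc L ^ 2 ≤ (s * l2norm v) ^ 2 := by nlinarith
      _ = s ^ 2 * l2norm v ^ 2 := by ring
  set δ : ℝ := 4 * s ^ 2 / n with hδ_def
  have hδ : 0 < δ := by positivity
  set k : ℕ := ⌈(n : ℝ) / s ^ 2⌉₊ with hk_def
  have hns2pos : 0 < (n : ℝ) / s ^ 2 := by positivity
  have hk1 : 1 ≤ k := Nat.one_le_iff_ne_zero.mpr (by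
    have := Nat.ceil_pos.mpr hns2pos
    omega)
  have hk_lt : (k : ℝ) < (n : ℝ) / s ^ 2 + 1 := Nat.ceil_lt_add_one hns2pos.le
  have hs225 : (225 : ℝ) < s ^ 2 := by nlinarith
  have hcount : ∀ t : ℕ, t < k → s ^ 2 / δ + (n : ℝ) / 2 < (n : ℝ) - t := by
    intro t ht
    have h1 : (t : ℝ) + 1 ≤ k := by exact_mod_cast Nat.succ_le_of_lt ht
    have h2 : (t : ℝ) < (n : ℝ) / s ^ 2 := by linarith
    have h3 : (n : ℝ) / s ^ 2 < (n : ℝ) / 225 := by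
      apply div_lt_div_of_pos_left hnpos (by norm_num) hs225
    have h4 : (t : ℝ) < (n : ℝ) / 4 := by
      have : (n : ℝ) / 225 ≤ (n : ℝ) / 4 := by
        apply div_le_div_of_nonneg_left hnpos.le (by norm_num) (by norm_num)
      linarith
    have hδval : s ^ 2 / δ = (n : ℝ) / 4 := by
      rw [hδ_def]
      field_simp
    rw [hδval]
    linarith
  obtain ⟨T, hTcard, hTpos, -⟩ := barrier_select a s δ hδ hW hex hunit k hcount
  refine ⟨T, ?_, ?_, ?_⟩
  · rw [← Finset.card_pos, hTcard]; omega
  · rw [hTcard, stRank, hfro, ← hs_def]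
    calc (n : ℝ) / s ^ 2 ≤ ⌈(n : ℝ) / s ^ 2⌉₊ := Nat.le_ceil _
      _ = (k : ℝ) := by rw [hk_def]
  · -- spectral norm bound from positive definiteness of the barrier
    have hu10 : 2 + (k : ℝ) * δ ≤ 10 := by
      have h1 : (k : ℝ) * δ ≤ ((n : ℝ) / s ^ 2 + 1) * δ := by
        apply mul_le_mul_of_nonneg_right hk_lt.le hδ.le
      have h2 : ((n : ℝ) / s ^ 2 + 1) * δ = 4 + 4 * s ^ 2 / n := by
        rw [hδ_def]
        field_simp
      have h3 : 4 * s ^ 2 / n ≤ 4 := by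
        rw [div_le_iff₀ hnpos]
        nlinarith
      linarith
    have hpsd := hTpos.posSemidef
    have hquad : ∀ y : Fin m → ℝ, ∑ j ∈ T, (a j ⬝ᵥ y) ^ 2 ≤ 10 * (y ⬝ᵥ y) := by
      intro y
      have h0 := psd_quad hpsd y
      rw [Matrix.sub_mulVec, dotProduct_sub, Matrix.smul_mulVec, Matrix.one_mulVec,
        dotProduct_smul, smul_eq_mul, quad_sum_outer] at h0
      have hyy : 0 ≤ y ⬝ᵥ y := dot_self_nonneg y
      nlinarith
    apply KT.specNorm_le_of_bound _ (by norm_num)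
    intro x hx
    set y : Fin m → ℝ := (A.submatrix id (fun j : T => (j : Fin n))).mulVec x with hy_def
    have hyy : y ⬝ᵥ y = ∑ j : {j // j ∈ T}, x j * (a (j : Fin n) ⬝ᵥ y) := by
      have h1 : y ⬝ᵥ y
          = x ⬝ᵥ ((A.submatrix id (fun j : T => (j : Fin n)))ᵀ *ᵥ y) := by
        calc y ⬝ᵥ y = y ⬝ᵥ ((A.submatrix id (fun j : T => (j : Fin n))) *ᵥ x) := by
              rw [← hy_def]
          _ = (y ᵥ* (A.submatrix id (fun j : T => (j : Fin n)))) ⬝ᵥ x :=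
              Matrix.dotProduct_mulVec y _ x
          _ = ((A.submatrix id (fun j : T => (j : Fin n)))ᵀ *ᵥ y) ⬝ᵥ x := by
              rw [Matrix.mulVec_transpose]
          _ = x ⬝ᵥ ((A.submatrix id (fun j : T => (j : Fin n)))ᵀ *ᵥ y) := dotProduct_comm _ _
      rw [h1]
      apply Finset.sum_congr rfl
      intro j _
      rfl
    have hcs : y ⬝ᵥ y ≤ l2norm x * l2norm (fun j : {j // j ∈ T} => a (j : Fin n) ⬝ᵥ y) := by
      rw [hyy]
      exact KT.dot_le x _
    have hsum_eq : (∑ j : {j // j ∈ T}, (a (j : Fin n) ⬝ᵥ y) ^ 2)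
        = ∑ j ∈ T, (a j ⬝ᵥ y) ^ 2 := by
      rw [Finset.univ_eq_attach]
      exact Finset.sum_attach T (fun j => (a j ⬝ᵥ y) ^ 2)
    have hl2c : l2norm (fun j : {j // j ∈ T} => a (j : Fin n) ⬝ᵥ y)
        ≤ Real.sqrt (10 * (y ⬝ᵥ y)) := by
      unfold l2norm
      apply Real.sqrt_le_sqrt
      rw [hsum_eq]
      exact hquad y
    have hy2 : y ⬝ᵥ y = l2norm y ^ 2 := KT.dot_self_eq y
    have hfin : l2norm y ^ 2 ≤ Real.sqrt 10 * l2norm y := by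
      calc l2norm y ^ 2 = y ⬝ᵥ y := hy2.symm
        _ ≤ l2norm x * l2norm (fun j : {j // j ∈ T} => a (j : Fin n) ⬝ᵥ y) := hcs
        _ = l2norm (fun j : {j // j ∈ T} => a (j : Fin n) ⬝ᵥ y) := by rw [hx, one_mul]
        _ ≤ Real.sqrt (10 * (y ⬝ᵥ y)) := hl2c
        _ = Real.sqrt 10 * l2norm y := by
            rw [hy2, Real.sqrt_mul (by norm_num), Real.sqrt_sq (KT.l2norm_nonneg y)]
    have hyle : l2norm y ≤ Real.sqrt 10 := by
      rcases eq_or_lt_of_le (KT.l2norm_nonneg y) with h0 | h0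
      · rw [← h0]; positivity
      · nlinarith
    calc l2norm y ≤ Real.sqrt 10 := hyle
      _ ≤ Real.sqrt 225 := Real.sqrt_le_sqrt (by norm_num)
      _ = 15 := by
          rw [show (225 : ℝ) = 15 ^ 2 by norm_num]
          exact Real.sqrt_sq (by norm_num)

end KTHard

/-- Kashin–Tzafriri: every standardized matrix with at least one column contains a
column submatrix `A_τ` with `|τ| ≥ st.rank A` and `‖A_τ‖ ≤ 15`. -/
theorem stmt_0 {m n : ℕ} (hn : 1 ≤ n) (A : Matrix (Fin m) (Fin n) ℝ)
    (hA : ∀ j, l2norm (fun i => A i j) = 1) :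
    ∃ τ : Finset (Fin n), τ.Nonempty ∧ stRank A ≤ (τ.card : ℝ) ∧
      specNorm (A.submatrix id (fun j : τ => (j : Fin n))) ≤ 15 := by
  classical
  have j0 : Fin n := ⟨0, by omega⟩
  have hfro : froNorm A ^ 2 = n := by
    have hsum : ∑ i, ∑ j, A i j ^ 2 = (n : ℝ) := by
      rw [Finset.sum_comm]
      have h1 : ∀ j : Fin n, (∑ i, A i j ^ 2) = 1 := fun j => KT.sum_sq_eq_one (hA j)
      simp [h1]
    rw [froNorm, Real.sq_sqrt (by positivity), hsum]
  have hs1 : (1 : ℝ) ≤ specNorm A := by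
    have h := KT.le_specNorm A (KT.unitVec j0) (KT.l2norm_unitVec j0)
    rwa [KT.mulVec_unitVec, hA j0] at h
  have hstn : stRank A ≤ (n : ℝ) := by
    rw [stRank, hfro]
    exact div_le_self (Nat.cast_nonneg n) (by nlinarith)
  by_cases hspec : specNorm A ≤ 15
  · -- the whole matrix works
    refine ⟨Finset.univ, ⟨j0, Finset.mem_univ j0⟩, ?_, ?_⟩
    · rwa [Finset.card_univ, Fintype.card_fin]
    · apply KT.specNorm_le_of_bound _ (by norm_num)
      intro x hx
      set y : Fin n → ℝ := fun j => x ⟨j, Finset.mem_univ j⟩ with hy_def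
      have hsum_eq : ∑ a : {a // a ∈ (Finset.univ : Finset (Fin n))}, (x a) ^ 2
          = ∑ j : Fin n, (y j) ^ 2 :=
        Fintype.sum_equiv (Equiv.subtypeUnivEquiv Finset.mem_univ) _ _ (fun a => rfl)
      have hy : l2norm y = 1 := by
        rw [l2norm, ← hsum_eq]
        exact hx
      have hmv : (A.submatrix id (fun j : (Finset.univ : Finset (Fin n)) => (j : Fin n))).mulVec x
          = A.mulVec y := by
        funext i
        show ∑ a : {a // a ∈ (Finset.univ : Finset (Fin n))}, A i (a : Fin n) * x a
            = ∑ j : Fin n, A i j * y j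
        exact Fintype.sum_equiv (Equiv.subtypeUnivEquiv Finset.mem_univ) _ _ (fun a => rfl)
      rw [hmv]
      exact le_trans (KT.le_specNorm A y hy) hspec
  · exact KT.hard hn A hA (not_le.mp hspec)
end

section
/- Let B be a real m×s matrix, D an s×s nonnegative diagonal matrix, and α > 0. If BᵀB − α²D² ≼ 0, then the matrix T = B·D† satisfies B = T·D and ‖T‖ ≤ α, where ‖T‖ is the spectral norm. -/
open Matrix

/-- If `BᵀB − α²D² ≼ 0` with `D` nonnegative diagonal and `α > 0`, then
`T = B·D†` satisfies `B = T·D` and `‖T‖ ≤ α`. -/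
theorem stmt_7 {m s : ℕ} (B : Matrix (Fin m) (Fin s) ℝ)
    (D : Matrix (Fin s) (Fin s) ℝ) (α : ℝ) (hα : 0 < α)
    (hDdiag : ∀ i j, i ≠ j → D i j = 0) (hDnn : ∀ i, 0 ≤ D i i)
    (hnsd : ∀ x : Fin s → ℝ, x ⬝ᵥ (Bᵀ * B - α ^ 2 • (D * D)).mulVec x ≤ 0) :
    B = (B * Matrix.diagonal fun j => (D j j)⁻¹) * D ∧
      specNorm (B * Matrix.diagonal fun j => (D j j)⁻¹) ≤ α := by
  classical
  set d : Fin s → ℝ := fun j => D j j with hd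
  have hD : D = Matrix.diagonal d := by
    ext i j
    by_cases h : i = j
    · subst h; simp [Matrix.diagonal_apply_eq, d]
    · simp [Matrix.diagonal_apply_ne _ h, hDdiag i j h]
  have key : ∀ y : Fin s → ℝ,
      ∑ i, (B.mulVec y i) ^ 2 ≤ α ^ 2 * ∑ j, (d j * y j) ^ 2 := by
    intro y
    have h := hnsd y
    rw [Matrix.sub_mulVec, dotProduct_sub, sub_nonpos] at h
    have h1 : y ⬝ᵥ (Bᵀ * B).mulVec y = ∑ i, (B.mulVec y i) ^ 2 := by
      rw [← Matrix.mulVec_mulVec, Matrix.dotProduct_mulVec, Matrix.vecMul_transpose]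
      simp [dotProduct, sq]
    have h2 : y ⬝ᵥ (α ^ 2 • (D * D)).mulVec y = α ^ 2 * ∑ j, (d j * y j) ^ 2 := by
      rw [hD, Matrix.diagonal_mul_diagonal, Matrix.smul_mulVec]
      simp only [dotProduct, Pi.smul_apply, Matrix.mulVec_diagonal, smul_eq_mul,
        Finset.mul_sum]
      exact Finset.sum_congr rfl fun j _ => by ring
    rw [h1, h2] at h
    exact h
  have hcol : ∀ j, d j = 0 → ∀ i, B i j = 0 := by
    intro j hj i
    have h := key (Pi.single j 1 : Fin s → ℝ)
    have e1 : ∀ i, B.mulVec (Pi.single j 1 : Fin s → ℝ) i = B i j := by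
      intro i
      simp [Matrix.mulVec, dotProduct, Pi.single_apply, mul_ite, Finset.sum_ite_eq']
    have e2 : ∑ k, (d k * (Pi.single j 1 : Fin s → ℝ) k) ^ 2 = (d j) ^ 2 := by
      rw [Finset.sum_eq_single j]
      · simp
      · intro k _ hk; simp [Pi.single_eq_of_ne hk]
      · simp
    simp only [e1, e2, hj] at h
    have hsum : ∑ i, (B i j) ^ 2 ≤ 0 := by simpa using h
    have hz : ∑ i, (B i j) ^ 2 = 0 :=
      le_antisymm hsum (Finset.sum_nonneg fun i _ => sq_nonneg _)
    have := (Finset.sum_eq_zero_iff_of_nonneg (fun i _ => sq_nonneg (B i j))).mp hz i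
      (Finset.mem_univ i)
    exact pow_eq_zero_iff (two_ne_zero) |>.mp this
  constructor
  · rw [hD, Matrix.mul_assoc, Matrix.diagonal_mul_diagonal]
    ext i j
    rw [Matrix.mul_diagonal]
    by_cases hj : d j = 0
    · simp [hj, hcol j hj i]
    · simp [inv_mul_cancel₀ hj]
  · apply Real.iSup_le _ hα.le
    rintro ⟨x, hx⟩
    have hx1 : ∑ j, x j ^ 2 = 1 := by
      have := hx
      unfold l2norm at this
      nlinarith [Real.sq_sqrt (Finset.sum_nonneg fun j (_ : j ∈ Finset.univ) => sq_nonneg (x j)),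
        Real.sqrt_nonneg (∑ j, x j ^ 2)]
    have hT : (B * Matrix.diagonal fun j => (D j j)⁻¹).mulVec x
        = B.mulVec (fun j => (d j)⁻¹ * x j) := by
      have hdiag : (Matrix.diagonal fun j => (D j j)⁻¹).mulVec x
          = fun j => (d j)⁻¹ * x j :=
        funext fun j => Matrix.mulVec_diagonal _ _ _
      rw [← Matrix.mulVec_mulVec, hdiag]
    have hkey := key (fun j => (d j)⁻¹ * x j)
    have hterm : ∑ j, (d j * ((d j)⁻¹ * x j)) ^ 2 ≤ ∑ j, x j ^ 2 := by
      apply Finset.sum_le_sum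
      intro j _
      by_cases hj : d j = 0
      · simp [hj, sq_nonneg]
      · rw [← mul_assoc, mul_inv_cancel₀ hj, one_mul]
    have hfin : ∑ i, ((B * Matrix.diagonal fun j => (D j j)⁻¹).mulVec x i) ^ 2 ≤ α ^ 2 := by
      rw [hT]
      calc ∑ i, (B.mulVec (fun j => (d j)⁻¹ * x j) i) ^ 2
          ≤ α ^ 2 * ∑ j, (d j * ((d j)⁻¹ * x j)) ^ 2 := hkey
        _ ≤ α ^ 2 * ∑ j, x j ^ 2 := by
            exact mul_le_mul_of_nonneg_left hterm (sq_nonneg α)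
        _ = α ^ 2 := by rw [hx1, mul_one]
    unfold l2norm
    calc Real.sqrt (∑ i, ((B * Matrix.diagonal fun j => (D j j)⁻¹).mulVec x i) ^ 2)
        ≤ Real.sqrt (α ^ 2) := Real.sqrt_le_sqrt hfin
      _ = α := by rw [Real.sqrt_sq hα.le]
end

section
/- Let A be a real standardized matrix with hollow Gram matrix H = AᵀA − I. If τ is a set of column indices for which the spectral norm ‖H_{τ×τ}‖ ≤ 1/2, then the condition number satisfies κ(A_τ) ≤ √3; that is, ‖A_τ x‖₂ ≤ √3 · ‖A_τ y‖₂ for all unit vectors x and y. -/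
open Matrix

section AuxStmt10

lemma aux10_l2norm_nonneg {ι : Type*} [Fintype ι] (v : ι → ℝ) : 0 ≤ l2norm v :=
  Real.sqrt_nonneg _

lemma aux10_sum_sq_eq_one {ι : Type*} [Fintype ι] {v : ι → ℝ} (h : l2norm v = 1) :
    ∑ i, v i ^ 2 = 1 := by
  have h2 : Real.sqrt (∑ i, v i ^ 2) = 1 := h
  nlinarith [Real.sq_sqrt (Finset.sum_nonneg (fun i _ => sq_nonneg (v i)) :
    (0:ℝ) ≤ ∑ i, v i ^ 2)]

lemma aux10_abs_dot_le {ι : Type*} [Fintype ι] (v w : ι → ℝ) :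
    |v ⬝ᵥ w| ≤ l2norm v * l2norm w := by
  have h := Finset.sum_mul_sq_le_sq_mul_sq Finset.univ v w
  have h2 : |v ⬝ᵥ w| = Real.sqrt ((∑ i, v i * w i) ^ 2) := by
    rw [Real.sqrt_sq_eq_abs]; rfl
  rw [h2]
  calc Real.sqrt ((∑ i, v i * w i) ^ 2)
      ≤ Real.sqrt ((∑ i, v i ^ 2) * ∑ i, w i ^ 2) := Real.sqrt_le_sqrt h
    _ = l2norm v * l2norm w := Real.sqrt_mul (Finset.sum_nonneg fun _ _ => sq_nonneg _) _

lemma aux10_mulVec_sq_le {ι κ : Type*} [Fintype ι] [Fintype κ] (M : Matrix ι κ ℝ)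
    (x : κ → ℝ) :
    ∑ i, (M.mulVec x i) ^ 2 ≤ (∑ i, ∑ j, M i j ^ 2) * ∑ j, x j ^ 2 := by
  rw [Finset.sum_mul]
  apply Finset.sum_le_sum
  intro i _
  exact Finset.sum_mul_sq_le_sq_mul_sq Finset.univ (fun j => M i j) x

lemma aux10_l2_mulVec_le_spec {ι κ : Type*} [Fintype ι] [Fintype κ] (M : Matrix ι κ ℝ)
    {x : κ → ℝ} (hx : l2norm x = 1) :
    l2norm (M.mulVec x) ≤ specNorm M := by
  have hbdd : BddAbove (Set.range fun y : {y : κ → ℝ // l2norm y = 1} =>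
      l2norm (M.mulVec y.1)) := by
    refine ⟨Real.sqrt (∑ i, ∑ j, M i j ^ 2), ?_⟩
    rintro r ⟨y, rfl⟩
    have h1 : ∑ j, y.1 j ^ 2 = 1 := aux10_sum_sq_eq_one y.2
    have := aux10_mulVec_sq_le M y.1
    rw [h1, mul_one] at this
    exact Real.sqrt_le_sqrt this
  exact le_ciSup hbdd (⟨x, hx⟩ : {y : κ → ℝ // l2norm y = 1})

end AuxStmt10

/-- If the principal submatrix `H_{τ×τ}` of the hollow Gram matrix `H = AᵀA − I` of a
standardized matrix has spectral norm at most `1/2`, then `κ(A_τ) ≤ √3`. -/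
theorem stmt_10 {m n : ℕ} (A : Matrix (Fin m) (Fin n) ℝ)
    (hA : ∀ j, l2norm (fun i => A i j) = 1)
    (τ : Finset (Fin n))
    (hH : specNorm ((Aᵀ * A - 1).submatrix (fun i : τ => (i : Fin n))
        (fun j : τ => (j : Fin n))) ≤ 1 / 2) :
    ∀ x y : ↥τ → ℝ, l2norm x = 1 → l2norm y = 1 →
      l2norm ((A.submatrix id (fun j : τ => (j : Fin n))).mulVec x) ≤
        Real.sqrt 3 * l2norm ((A.submatrix id (fun j : τ => (j : Fin n))).mulVec y) := by
  intro x y hx hy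
  set B := A.submatrix id (fun j : τ => (j : Fin n)) with hB
  set M := (Aᵀ * A - 1).submatrix (fun i : τ => (i : Fin n)) (fun j : τ => (j : Fin n))
    with hM
  have hMeq : M = Bᵀ * B - 1 := by
    ext i j
    simp only [hM, hB, Matrix.submatrix_apply, Matrix.sub_apply, Matrix.mul_apply,
      Matrix.transpose_apply, Matrix.one_apply, id]
    congr 1
    by_cases h : i = j
    · simp [h]
    · have : (i : Fin n) ≠ (j : Fin n) := fun hc => h (Subtype.ext hc)
      simp [h, this]
  have key : ∀ z : ↥τ → ℝ, l2norm z = 1 →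
      1/2 ≤ ∑ i, (B.mulVec z i) ^ 2 ∧ ∑ i, (B.mulVec z i) ^ 2 ≤ 3/2 := by
    intro z hz
    have hzz : ∑ i, z i ^ 2 = 1 := aux10_sum_sq_eq_one hz
    have hid : z ⬝ᵥ M.mulVec z = (∑ i, (B.mulVec z i) ^ 2) - 1 := by
      rw [hMeq, Matrix.sub_mulVec, dotProduct_sub, Matrix.one_mulVec,
        ← Matrix.mulVec_mulVec, Matrix.dotProduct_mulVec, Matrix.vecMul_transpose]
      have h1 : B.mulVec z ⬝ᵥ B.mulVec z = ∑ i, (B.mulVec z i) ^ 2 := by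
        simp [dotProduct, sq]
      have h2 : z ⬝ᵥ z = (1:ℝ) := by simpa [dotProduct, sq] using hzz
      rw [h1, h2]
    have habs : |z ⬝ᵥ M.mulVec z| ≤ 1/2 := by
      calc |z ⬝ᵥ M.mulVec z| ≤ l2norm z * l2norm (M.mulVec z) := aux10_abs_dot_le _ _
        _ = l2norm (M.mulVec z) := by rw [hz, one_mul]
        _ ≤ specNorm M := aux10_l2_mulVec_le_spec M hz
        _ ≤ 1/2 := hH
    rw [hid] at habs
    constructor <;> [nlinarith [abs_le.1 habs]; nlinarith [abs_le.1 habs]]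
  obtain ⟨hx1, hx2⟩ := key x hx
  obtain ⟨hy1, hy2⟩ := key y hy
  have h3 : l2norm (B.mulVec x) ≤ Real.sqrt (3/2) := Real.sqrt_le_sqrt hx2
  have h4 : Real.sqrt (1/2) ≤ l2norm (B.mulVec y) := Real.sqrt_le_sqrt hy1
  have h5 : Real.sqrt (3/2) = Real.sqrt 3 * Real.sqrt (1/2) := by
    rw [← Real.sqrt_mul (by norm_num)]; norm_num
  calc l2norm (B.mulVec x) ≤ Real.sqrt (3/2) := h3
    _ = Real.sqrt 3 * Real.sqrt (1/2) := h5
    _ ≤ Real.sqrt 3 * l2norm (B.mulVec y) :=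
        mul_le_mul_of_nonneg_left h4 (Real.sqrt_nonneg 3)
end

section
/- Let G be a real symmetric s×s matrix, D an s×s nonnegative diagonal matrix with trace(D²) = 1, and α ≥ 0. If G = D·T·D for some real s×s matrix T with spectral norm ‖T‖ ≤ α, then the 2s×2s symmetric block matrix [[−αD², G],[G, −αD²]] is negative semidefinite. -/
open Matrix

namespace MyAux

lemma l2norm_nonneg {ι : Type*} [Fintype ι] (v : ι → ℝ) : 0 ≤ l2norm v :=
  Real.sqrt_nonneg _

lemma l2norm_sq {ι : Type*} [Fintype ι] (v : ι → ℝ) : l2norm v ^ 2 = ∑ i, v i ^ 2 :=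
  Real.sq_sqrt (Finset.sum_nonneg fun i _ => sq_nonneg _)

lemma dot_self_eq {ι : Type*} [Fintype ι] (v : ι → ℝ) : v ⬝ᵥ v = l2norm v ^ 2 := by
  rw [l2norm_sq]
  simp [dotProduct, sq]

lemma cs {ι : Type*} [Fintype ι] (a b : ι → ℝ) : |a ⬝ᵥ b| ≤ l2norm a * l2norm b := by
  have h := Finset.sum_mul_sq_le_sq_mul_sq Finset.univ a b
  have : (a ⬝ᵥ b) ^ 2 ≤ (l2norm a * l2norm b) ^ 2 := by
    rw [mul_pow, l2norm_sq, l2norm_sq]; exact h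
  calc |a ⬝ᵥ b| = Real.sqrt ((a ⬝ᵥ b) ^ 2) := (Real.sqrt_sq_eq_abs _).symm
    _ ≤ Real.sqrt ((l2norm a * l2norm b) ^ 2) := Real.sqrt_le_sqrt this
    _ = l2norm a * l2norm b := Real.sqrt_sq (mul_nonneg (l2norm_nonneg a) (l2norm_nonneg b))

lemma l2norm_smul {ι : Type*} [Fintype ι] (c : ℝ) (v : ι → ℝ) :
    l2norm (c • v) = |c| * l2norm v := by
  unfold l2norm
  rw [← Real.sqrt_sq_eq_abs, ← Real.sqrt_mul (sq_nonneg c)]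
  congr 1
  simp [Finset.mul_sum, mul_pow]

lemma l2norm_eq_zero {ι : Type*} [Fintype ι] {v : ι → ℝ} (h : l2norm v = 0) : v = 0 := by
  have h2 : ∑ i, v i ^ 2 = 0 := by
    have := l2norm_sq v; rw [h] at this; simpa using this.symm
  funext i
  have := (Finset.sum_eq_zero_iff_of_nonneg (fun i _ => sq_nonneg (v i))).mp h2 i (Finset.mem_univ i)
  exact pow_eq_zero_iff (by norm_num) |>.mp this

lemma mulVec_le {ι κ : Type*} [Fintype ι] [Fintype κ] (A : Matrix ι κ ℝ) (y : κ → ℝ) :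
    l2norm (A.mulVec y) ≤ specNorm A * l2norm y := by
  rcases eq_or_ne y 0 with rfl | hy
  · simp [l2norm, Matrix.mulVec_zero]
  · have hny : l2norm y ≠ 0 := fun h => hy (l2norm_eq_zero h)
    have hpos : 0 < l2norm y := lt_of_le_of_ne (l2norm_nonneg y) (Ne.symm hny)
    set c := (l2norm y)⁻¹ with hc
    have hx1 : l2norm (c • y) = 1 := by
      rw [l2norm_smul, abs_of_pos (inv_pos.mpr hpos), inv_mul_cancel₀ hny]
    have hbdd : BddAbove (Set.range fun x : {x : κ → ℝ // l2norm x = 1} =>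
        l2norm (A.mulVec x.1)) := by
      refine ⟨froNorm A, ?_⟩
      rintro r ⟨⟨x, hx⟩, rfl⟩
      have hsum : ∑ j, x j ^ 2 = 1 := by
        have := l2norm_sq x; rw [hx] at this; simpa using this.symm
      have hb : ∀ i, (A.mulVec x i) ^ 2 ≤ ∑ j, A i j ^ 2 := by
        intro i
        have := Finset.sum_mul_sq_le_sq_mul_sq Finset.univ (fun j => A i j) x
        rw [hsum, mul_one] at this
        simpa [Matrix.mulVec, dotProduct] using this
      have : ∑ i, (A.mulVec x i) ^ 2 ≤ ∑ i, ∑ j, A i j ^ 2 :=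
        Finset.sum_le_sum fun i _ => hb i
      exact Real.sqrt_le_sqrt this
    have hle : l2norm (A.mulVec (c • y)) ≤ specNorm A :=
      le_ciSup hbdd (⟨c • y, hx1⟩ : {x : κ → ℝ // l2norm x = 1})
    rw [Matrix.mulVec_smul, l2norm_smul, abs_of_pos (inv_pos.mpr hpos)] at hle
    calc l2norm (A.mulVec y) = l2norm y * ((l2norm y)⁻¹ * l2norm (A.mulVec y)) := by
          field_simp
      _ ≤ l2norm y * specNorm A := by
          exact mul_le_mul_of_nonneg_left hle hpos.le
      _ = specNorm A * l2norm y := mul_comm _ _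

end MyAux

/-- If `G = D·T·D` with `‖T‖ ≤ α`, `D` nonnegative diagonal with `trace(D²) = 1`,
then the block matrix `[[−αD², G],[G, −αD²]]` is negative semidefinite. -/
theorem stmt_14 {s : ℕ} (G T D : Matrix (Fin s) (Fin s) ℝ) (hG : G.IsSymm)
    (hDdiag : ∀ i j, i ≠ j → D i j = 0) (hDnn : ∀ i, 0 ≤ D i i)
    (hDtr : Matrix.trace (D * D) = 1)
    (α : ℝ) (hα : 0 ≤ α) (hGDTD : G = D * T * D) (hT : specNorm T ≤ α) :
    ∀ x : Fin s ⊕ Fin s → ℝ,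
      x ⬝ᵥ (Matrix.fromBlocks (-(α • (D * D))) G G (-(α • (D * D)))).mulVec x ≤ 0 := by
  intro x
  have hDsymm : Dᵀ = D := by
    ext i j
    rcases eq_or_ne i j with rfl | h
    · rfl
    · rw [Matrix.transpose_apply, hDdiag j i (Ne.symm h), hDdiag i j h]
  set u := x ∘ Sum.inl with hu
  set v := x ∘ Sum.inr with hv
  have hx : x = Sum.elim u v := funext fun i => by cases i <;> rfl
  rw [hx, Matrix.fromBlocks_mulVec, sumElim_dotProduct_sumElim]
  set a := D.mulVec u with ha
  set b := D.mulVec v with hb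
  have hdotD : ∀ w y : Fin s → ℝ, w ⬝ᵥ D.mulVec y = D.mulVec w ⬝ᵥ y := by
    intro w y
    rw [Matrix.dotProduct_mulVec, ← Matrix.mulVec_transpose, hDsymm]
  have e1 : ∀ w : Fin s → ℝ, w ⬝ᵥ (D * D).mulVec w = l2norm (D.mulVec w) ^ 2 := by
    intro w
    rw [← Matrix.mulVec_mulVec, hdotD, MyAux.dot_self_eq]
  have e3 : u ⬝ᵥ G.mulVec v = a ⬝ᵥ T.mulVec b := by
    rw [hGDTD]
    simp only [← Matrix.mulVec_mulVec]
    rw [hdotD]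
  have e4 : v ⬝ᵥ G.mulVec u = a ⬝ᵥ T.mulVec b := by
    rw [Matrix.dotProduct_mulVec, ← Matrix.mulVec_transpose, hG, dotProduct_comm, e3]
  have hab : a ⬝ᵥ T.mulVec b ≤ α * (l2norm a * l2norm b) := by
    calc a ⬝ᵥ T.mulVec b ≤ |a ⬝ᵥ T.mulVec b| := le_abs_self _
      _ ≤ l2norm a * l2norm (T.mulVec b) := MyAux.cs a _
      _ ≤ l2norm a * (specNorm T * l2norm b) := by
          exact mul_le_mul_of_nonneg_left (MyAux.mulVec_le T b) (MyAux.l2norm_nonneg a)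
      _ ≤ l2norm a * (α * l2norm b) := by
          have := mul_le_mul_of_nonneg_right hT (MyAux.l2norm_nonneg b)
          exact mul_le_mul_of_nonneg_left this (MyAux.l2norm_nonneg a)
      _ = α * (l2norm a * l2norm b) := by ring
  simp only [Sum.elim_comp_inl, Sum.elim_comp_inr, dotProduct_add,
    Matrix.neg_mulVec, dotProduct_neg,
    Matrix.smul_mulVec, dotProduct_smul, smul_eq_mul, e1, e3, e4]
  nlinarith [sq_nonneg (l2norm a - l2norm b), MyAux.l2norm_nonneg a, MyAux.l2norm_nonneg b]
end

section
/- Let G be a real symmetric s×s matrix, D an s×s nonnegative diagonal matrix with trace(D²) = 1, and α > 0. If the 2s×2s symmetric block matrix [[−αD², G],[G, −αD²]] is negative semidefinite, then the matrix T = D†·G·D† satisfies G = D·T·D and ‖T‖ ≤ α, where ‖T‖ is the spectral norm. -/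
open Matrix

lemma aux_zero' (c K : ℝ) (hK : 0 ≤ K) (h : ∀ t : ℝ, 2 * (t * c) ≤ K * t ^ 2) : c = 0 := by
  rcases eq_or_lt_of_le hK with hK0 | hKpos
  · have h1 := h c
    nlinarith [sq_nonneg c]
  · have h1 := h (c / K)
    have h2 : 2 * (c ^ 2 / K) ≤ K * (c / K) ^ 2 := by
      have : (c / K) * c = c ^ 2 / K := by ring
      rw [← this]; simpa using h1
    have h3 : K * (c / K) ^ 2 = c ^ 2 / K := by field_simp
    rw [h3] at h2
    have h4 : c ^ 2 / K ≤ 0 := by linarith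
    have hc2 : c ^ 2 ≤ 0 := by
      by_contra hc
      push_neg at hc
      exact absurd h4 (not_le.2 (div_pos hc hKpos))
    nlinarith [sq_nonneg c]


/-- If the block matrix `[[−αD², G],[G, −αD²]]` is negative semidefinite, with `D`
nonnegative diagonal of unit trace-square and `α > 0`, then `T = D†·G·D†`
satisfies `G = D·T·D` and `‖T‖ ≤ α`. -/
theorem stmt_15 {s : ℕ} (G D : Matrix (Fin s) (Fin s) ℝ) (hG : G.IsSymm)
    (hDdiag : ∀ i j, i ≠ j → D i j = 0) (hDnn : ∀ i, 0 ≤ D i i)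
    (hDtr : Matrix.trace (D * D) = 1) (α : ℝ) (hα : 0 < α)
    (hnsd : ∀ x : Fin s ⊕ Fin s → ℝ,
      x ⬝ᵥ (Matrix.fromBlocks (-(α • (D * D))) G G (-(α • (D * D)))).mulVec x ≤ 0) :
    G = D * ((Matrix.diagonal fun j => (D j j)⁻¹) * G *
        (Matrix.diagonal fun j => (D j j)⁻¹)) * D ∧
      specNorm ((Matrix.diagonal fun j => (D j j)⁻¹) * G *
        (Matrix.diagonal fun j => (D j j)⁻¹)) ≤ α := by

  have hDeq : D = Matrix.diagonal (fun i => D i i) := by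
    ext i j
    by_cases h : i = j
    · subst h; simp
    · simp [Matrix.diagonal_apply_ne _ h, hDdiag i j h]
  -- the key bilinear inequality
  have key : ∀ u v : Fin s → ℝ,
      2 * (∑ i, ∑ j, u i * (G i j * v j)) ≤
        α * ((∑ i, (D i i * u i) ^ 2) + ∑ i, (D i i * v i) ^ 2) := by
    intro u v
    have h := hnsd (Sum.elim u v)
    rw [hDeq] at h
    simp only [Matrix.diagonal_mul_diagonal, Matrix.fromBlocks_mulVec, dotProduct,
      Fintype.sum_sum_type, Sum.elim_inl, Sum.elim_inr, Pi.add_apply, Matrix.mulVec,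
      Matrix.neg_apply, Matrix.smul_apply, smul_eq_mul, Matrix.diagonal_apply,
      Matrix.fromBlocks_apply₁₁, Matrix.fromBlocks_apply₁₂, Matrix.fromBlocks_apply₂₁,
      Matrix.fromBlocks_apply₂₂, dotProduct, mul_ite, mul_zero, ite_mul, zero_mul,
      neg_mul, neg_neg, Finset.sum_ite_eq, Finset.mem_univ, if_true, mul_add] at h
    simp only [Finset.sum_neg_distrib, Finset.sum_ite_eq, Finset.mem_univ, if_true, mul_neg,
      Finset.sum_add_distrib] at h
    have hsym : ∑ i, ∑ j, v i * (G i j * u j) = ∑ i, ∑ j, u i * (G i j * v j) := by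
      rw [Finset.sum_comm]
      refine Finset.sum_congr rfl fun a _ => Finset.sum_congr rfl fun b _ => ?_
      rw [hG.apply a b]; ring
    have e1 : ∑ i, u i * ∑ j, G i j * v j = ∑ i, ∑ j, u i * (G i j * v j) := by
      simp [Finset.mul_sum]
    have e2 : ∑ i, v i * ∑ j, G i j * u j = ∑ i, ∑ j, v i * (G i j * u j) := by
      simp [Finset.mul_sum]
    rw [e1, e2, hsym] at h
    have e4 : ∑ x, u x * (α * (D x x * D x x) * u x) = α * ∑ i, (D i i * u i) ^ 2 := by
      rw [Finset.mul_sum]; exact Finset.sum_congr rfl fun i _ => by ring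
    have e5 : ∑ x, v x * (α * (D x x * D x x) * v x) = α * ∑ i, (D i i * v i) ^ 2 := by
      rw [Finset.mul_sum]; exact Finset.sum_congr rfl fun i _ => by ring
    rw [e4, e5] at h
    rw [mul_add]
    linarith
  -- entries of G vanish when the corresponding diagonal entry of D is 0
  have hzero : ∀ i j, D i i = 0 → G i j = 0 := by
    intro i j hdi
    apply aux_zero' (G i j) (α * D j j ^ 2) (by positivity)
    intro t
    have h := key (fun a => if a = i then (1:ℝ) else 0) (fun b => if b = j then t else 0)
    simp only [ite_mul, mul_ite, one_mul, zero_mul, mul_zero, mul_one,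
      Finset.sum_ite_eq', Finset.mem_univ, if_true] at h
    calc 2 * (t * G i j) = 2 * ∑ a, ∑ b, (if a = i then (1:ℝ) else 0) *
          (G a b * (if b = j then t else 0)) := by
          rw [show ∑ a, ∑ b, (if a = i then (1:ℝ) else 0) *
              (G a b * (if b = j then t else 0)) = G i j * t from ?_]
          · ring
          · rw [Finset.sum_eq_single i]
            · rw [Finset.sum_eq_single j] <;> simp +contextual
            · intro b _ hb; simp [hb]
            · simp
      _ ≤ α * ((∑ a, (D a a * (if a = i then (1:ℝ) else 0)) ^ 2) +
            ∑ b, (D b b * (if b = j then t else 0)) ^ 2) := key _ _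
      _ = α * D j j ^ 2 * t ^ 2 := by
          rw [Finset.sum_eq_single i, Finset.sum_eq_single j]
          · simp [hdi]; ring
          · intro b _ hb; simp [hb]
          · simp
          · intro a _ ha; simp [ha]
          · simp
  constructor
  · ext i j
    have hE : ((Matrix.diagonal fun j => (D j j)⁻¹) * G *
        (Matrix.diagonal fun j => (D j j)⁻¹)) i j = (D i i)⁻¹ * G i j * (D j j)⁻¹ := by
      rw [Matrix.mul_diagonal, Matrix.diagonal_mul]
    rw [show (D * ((Matrix.diagonal fun j => (D j j)⁻¹) * G *
        (Matrix.diagonal fun j => (D j j)⁻¹)) * D) i j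
        = D i i * ((D i i)⁻¹ * G i j * (D j j)⁻¹) * D j j from ?_]
    · by_cases hdi : D i i = 0
      · simp [hzero i j hdi]
      · by_cases hdj : D j j = 0
        · have : G i j = G j i := hG.apply j i
          simp [this, hzero j i hdj]
        · field_simp
    · have hDmul : ∀ (M : Matrix (Fin s) (Fin s) ℝ), (D * M * D) i j = D i i * M i j * D j j := by
        intro M
        rw [Matrix.mul_apply, Finset.sum_eq_single j]
        · rw [Matrix.mul_apply, Finset.sum_eq_single i]
          · intro b _ hb; simp [hDdiag i b (Ne.symm hb)]
          · simp
        · intro b _ hb; simp [hDdiag b j hb]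
        · simp
      rw [hDmul, hE]
  · -- spectral norm bound
    have bound : ∀ x : Fin s → ℝ, l2norm x = 1 →
        l2norm (((Matrix.diagonal fun j => (D j j)⁻¹) * G *
          (Matrix.diagonal fun j => (D j j)⁻¹)).mulVec x) ≤ α := by
      intro x hx
      set w : Fin s → ℝ := ((Matrix.diagonal fun j => (D j j)⁻¹) * G *
          (Matrix.diagonal fun j => (D j j)⁻¹)).mulVec x with hwdef
      set r : Fin s → ℝ := fun i => ∑ j, G i j * ((D j j)⁻¹ * x j) with hrdef
      have hw : ∀ i, w i = (D i i)⁻¹ * r i := by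
        intro i
        simp only [hwdef, Matrix.mulVec, dotProduct, Matrix.mul_diagonal,
          Matrix.diagonal_mul, hrdef, Finset.mul_sum]
        exact Finset.sum_congr rfl fun j _ => by ring
      set S : ℝ := ∑ i, w i ^ 2 with hSdef
      have hS0 : 0 ≤ S := Finset.sum_nonneg fun i _ => sq_nonneg _
      have hl2 : l2norm w = Real.sqrt S := rfl
      rcases eq_or_lt_of_le hS0 with hS | hSpos
      · rw [hl2, ← hS, Real.sqrt_zero]; exact hα.le
      · set a : ℝ := Real.sqrt S with hadef
        have ha_pos : 0 < a := Real.sqrt_pos.2 hSpos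
        have ha2 : a ^ 2 = S := Real.sq_sqrt hS0
        have hx2 : ∑ j, x j ^ 2 = 1 := by
          have h1 : Real.sqrt (∑ j, x j ^ 2) = 1 := hx
          have h2 := Real.sq_sqrt (Finset.sum_nonneg fun j (_ : j ∈ Finset.univ) => sq_nonneg (x j))
          rw [h1] at h2; linarith [h2]
        have h := key (fun i => a⁻¹ * ((D i i)⁻¹ * w i)) (fun j => (D j j)⁻¹ * x j)
        -- LHS equals 2 * (a⁻¹ * S)
        have eL : ∑ i, ∑ j, (a⁻¹ * ((D i i)⁻¹ * w i)) * (G i j * ((D j j)⁻¹ * x j))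
            = a⁻¹ * S := by
          rw [hSdef, Finset.mul_sum]
          refine Finset.sum_congr rfl fun i _ => ?_
          rw [← Finset.mul_sum]
          show a⁻¹ * ((D i i)⁻¹ * w i) * r i = a⁻¹ * w i ^ 2
          rw [hw i]; ring
        -- first RHS sum ≤ 1
        have eR1 : (∑ i, (D i i * (a⁻¹ * ((D i i)⁻¹ * w i))) ^ 2) ≤ 1 := by
          calc (∑ i, (D i i * (a⁻¹ * ((D i i)⁻¹ * w i))) ^ 2)
              ≤ ∑ i, (a⁻¹ * w i) ^ 2 := by
                refine Finset.sum_le_sum fun i _ => ?_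
                by_cases hdi : D i i = 0
                · simp [hdi]; positivity
                · rw [show D i i * (a⁻¹ * ((D i i)⁻¹ * w i)) = (D i i * (D i i)⁻¹) * (a⁻¹ * w i)
                      from by ring, mul_inv_cancel₀ hdi, one_mul]
            _ = a⁻¹ ^ 2 * S := by
                rw [hSdef, Finset.mul_sum]
                exact Finset.sum_congr rfl fun i _ => by ring
            _ = 1 := by
                rw [← ha2]
                field_simp
        have eR2 : (∑ j, (D j j * ((D j j)⁻¹ * x j)) ^ 2) ≤ 1 := by
          calc (∑ j, (D j j * ((D j j)⁻¹ * x j)) ^ 2)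
              ≤ ∑ j, x j ^ 2 := by
                refine Finset.sum_le_sum fun j _ => ?_
                by_cases hdj : D j j = 0
                · simp [hdj]; positivity
                · rw [show D j j * ((D j j)⁻¹ * x j) = x j from by field_simp]
            _ = 1 := hx2
        rw [eL] at h
        have hfin : 2 * (a⁻¹ * S) ≤ α * 2 := by nlinarith
        have haS : a⁻¹ * S = a := by
          rw [← ha2]; field_simp
        rw [haS] at hfin
        rw [hl2]
        linarith
    exact Real.iSup_le (fun p => bound p.1 p.2) hα.le
end

section
/- (Poissonization.) Fix δ ∈ [0,1], let n ≥ 1, and set s = ⌊δn⌋. Let N be a norm on real m×n matrices that is monotonic, meaning N(P·A·P') ≤ N(A) for every matrix A and all 0–1 diagonal projectors P (m×m) and P' (n×n). Then for every real m×n matrix A, (1/C(n,s)) · Σ_{σ ⊆ {1,…,n}, |σ| = s} N(A·P_σ) ≤ 2 · Σ_{σ ⊆ {1,…,n}} δ^{|σ|}(1−δ)^{n−|σ|} · N(A·P_σ), where P_σ is the n×n diagonal 0–1 projector whose j-th diagonal entry is 1 exactly when j ∈ σ. -/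
open Matrix

open Finset

/-- Number of `b`-subsets of `s` containing a fixed `a`-subset `t`. -/
lemma aux_card_filter_superset {α : Type*} [DecidableEq α] (s t : Finset α) (b : ℕ)
    (hts : t ⊆ s) (htb : t.card ≤ b) :
    ((s.powersetCard b).filter fun u => t ⊆ u).card
      = (s.card - t.card).choose (b - t.card) := by
  have h : ((s.powersetCard b).filter fun u => t ⊆ u).card
      = ((s \ t).powersetCard (b - t.card)).card := by
    apply Finset.card_nbij' (fun u => u \ t) (fun ρ => ρ ∪ t)
    · intro u hu
      simp only [mem_coe, mem_filter, mem_powersetCard] at hu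
      obtain ⟨⟨hus, huc⟩, htu⟩ := hu
      simp only [mem_coe, mem_powersetCard]
      refine ⟨sdiff_subset_sdiff hus (le_refl t), ?_⟩
      rw [card_sdiff_of_subset htu, huc]
    · intro ρ hρ
      rw [mem_coe, mem_powersetCard] at hρ
      obtain ⟨hρs, hρc⟩ := hρ
      have hdisj : Disjoint ρ t := disjoint_of_subset_left hρs (sdiff_disjoint)
      simp only [mem_coe, mem_filter, mem_powersetCard]
      refine ⟨⟨union_subset (hρs.trans sdiff_subset) hts, ?_⟩, subset_union_right⟩
      rw [card_union_of_disjoint hdisj, hρc]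
      omega
    · intro u hu
      simp only [mem_coe, mem_filter] at hu
      exact sdiff_union_of_subset hu.2
    · intro ρ hρ
      rw [mem_coe, mem_powersetCard] at hρ
      have hdisj : Disjoint ρ t := disjoint_of_subset_left hρ.1 (sdiff_disjoint)
      simp only [union_sdiff_right, sdiff_eq_self_of_disjoint hdisj]
  rw [h, card_powersetCard, card_sdiff_of_subset hts]

/-- Double counting over pairs `τ ⊆ σ` with `|τ| = a`, `|σ| = b`. -/
lemma aux_double_count {α : Type*} [Fintype α] [DecidableEq α] (a b : ℕ) (hab : a ≤ b)
    (g : Finset α → ℝ) :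
    ∑ σ ∈ Finset.powersetCard b (Finset.univ : Finset α), ∑ τ ∈ σ.powersetCard a, g τ
      = ((Fintype.card α - a).choose (b - a)) *
          ∑ τ ∈ Finset.powersetCard a (Finset.univ : Finset α), g τ := by
  have h1 : ∀ σ : Finset α, σ.powersetCard a
      = (Finset.powersetCard a (Finset.univ : Finset α)).filter fun τ => τ ⊆ σ := by
    intro σ
    ext τ
    simp only [mem_powersetCard, mem_filter]
    exact ⟨fun ⟨h, hc⟩ => ⟨⟨subset_univ τ, hc⟩, h⟩, fun ⟨⟨_, hc⟩, h⟩ => ⟨h, hc⟩⟩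
  calc ∑ σ ∈ Finset.powersetCard b (Finset.univ : Finset α), ∑ τ ∈ σ.powersetCard a, g τ
      = ∑ σ ∈ Finset.powersetCard b (Finset.univ : Finset α),
          ∑ τ ∈ Finset.powersetCard a (Finset.univ : Finset α), if τ ⊆ σ then g τ else 0 := by
        refine Finset.sum_congr rfl fun σ _ => ?_
        rw [h1 σ, Finset.sum_filter]
    _ = ∑ τ ∈ Finset.powersetCard a (Finset.univ : Finset α),
          ∑ σ ∈ Finset.powersetCard b (Finset.univ : Finset α), if τ ⊆ σ then g τ else 0 :=
        Finset.sum_comm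
    _ = ∑ τ ∈ Finset.powersetCard a (Finset.univ : Finset α),
          (((Finset.powersetCard b (Finset.univ : Finset α)).filter fun σ => τ ⊆ σ).card : ℝ)
            * g τ := by
        refine Finset.sum_congr rfl fun τ _ => ?_
        rw [← Finset.sum_filter, Finset.sum_const, nsmul_eq_mul]
    _ = _ := by
        rw [Finset.mul_sum]
        refine Finset.sum_congr rfl fun τ hτ => ?_
        rw [mem_powersetCard] at hτ
        rw [aux_card_filter_superset _ _ _ hτ.1 (hτ.2 ▸ hab), hτ.2, card_univ]

open Finset Matrix

section NormLems

variable {m n : ℕ} (N : Matrix (Fin m) (Fin n) ℝ → ℝ)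
  (hN_add : ∀ A B : Matrix (Fin m) (Fin n) ℝ, N (A + B) ≤ N A + N B)
  (hN_smul : ∀ (c : ℝ) (A : Matrix (Fin m) (Fin n) ℝ), N (c • A) = |c| * N A)

/-- the diagonal projector -/
noncomputable def Dproj {n : ℕ} (σ : Finset (Fin n)) : Matrix (Fin n) (Fin n) ℝ :=
  Matrix.diagonal fun j => if j ∈ σ then (1 : ℝ) else 0

include hN_smul in
lemma N_zero : N 0 = 0 := by
  have := hN_smul 0 0
  simpa using this

include hN_add hN_smul in
lemma N_nonneg (A : Matrix (Fin m) (Fin n) ℝ) : 0 ≤ N A := by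
  have h1 := hN_add A (-A)
  have h2 : N (-A) = N A := by
    have := hN_smul (-1) A
    simpa using this
  have h3 : N (A + -A) = 0 := by
    rw [add_neg_cancel, N_zero N hN_smul]
  nlinarith

include hN_add hN_smul in
lemma N_sum_le {ι : Type*} (T : Finset ι) (M : ι → Matrix (Fin m) (Fin n) ℝ) :
    N (∑ t ∈ T, M t) ≤ ∑ t ∈ T, N (M t) := by
  induction T using Finset.cons_induction with
  | empty => simp [N_zero N hN_smul]
  | cons a T ha ih =>
    rw [Finset.sum_cons, Finset.sum_cons]
    exact (hN_add _ _).trans (by linarith)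

lemma N_mono_subset (N : Matrix (Fin m) (Fin n) ℝ → ℝ)
    (hN_mono : ∀ (A : Matrix (Fin m) (Fin n) ℝ)
      (P : Matrix (Fin m) (Fin m) ℝ) (P' : Matrix (Fin n) (Fin n) ℝ),
      (∀ i j, i ≠ j → P i j = 0) → (∀ i, P i i = 0 ∨ P i i = 1) →
      (∀ i j, i ≠ j → P' i j = 0) → (∀ i, P' i i = 0 ∨ P' i i = 1) →
      N (P * A * P') ≤ N A)
    (A : Matrix (Fin m) (Fin n) ℝ) {σ τ : Finset (Fin n)} (hστ : σ ⊆ τ) :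
    N (A * Dproj σ) ≤ N (A * Dproj τ) := by
  have key := hN_mono (A * Dproj τ) 1 (Dproj σ)
    (fun i j hij => Matrix.one_apply_ne hij)
    (fun i => Or.inr (Matrix.one_apply_eq i))
    (fun i j hij => Matrix.diagonal_apply_ne _ hij)
    (fun i => by
      rw [Dproj, Matrix.diagonal_apply_eq]
      by_cases h : i ∈ σ <;> simp [h])
  have heq : (1 : Matrix (Fin m) (Fin m) ℝ) * (A * Dproj τ) * Dproj σ = A * Dproj σ := by
    rw [Matrix.one_mul, Matrix.mul_assoc]
    congr 1
    rw [Dproj, Dproj, Matrix.diagonal_mul_diagonal]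
    have hfun : (fun i => (if i ∈ τ then (1:ℝ) else 0) * (if i ∈ σ then (1:ℝ) else 0))
        = fun i => if i ∈ σ then (1:ℝ) else 0 := by
      funext i
      by_cases hi : i ∈ σ
      · simp [hi, hστ hi]
      · simp [hi]
    rw [hfun]
  rw [heq] at key
  exact key

end NormLems

section Split

lemma split_identity {m n : ℕ} (A : Matrix (Fin m) (Fin n) ℝ) (σ : Finset (Fin n))
    (k : ℕ) (hk : 1 ≤ k) :
    ∑ τ ∈ σ.powersetCard k, (A * Dproj τ)
       = (((σ.card - 1).choose (k - 1) : ℕ) : ℝ) • (A * Dproj σ) := by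
  ext i j
  rw [Matrix.sum_apply]
  simp only [Matrix.smul_apply, smul_eq_mul, Dproj, Matrix.mul_diagonal]
  have hterm : ∀ τ ∈ σ.powersetCard k,
      A i j * (if j ∈ τ then (1:ℝ) else 0) = if j ∈ τ then A i j else 0 := by
    intro τ _; by_cases hj : j ∈ τ <;> simp [hj]
  rw [← Finset.mul_sum, Finset.sum_boole]
  by_cases hj : j ∈ σ
  · have hfil : (σ.powersetCard k).filter (fun τ => j ∈ τ)
        = (σ.powersetCard k).filter (fun τ => {j} ⊆ τ) := by
      refine Finset.filter_congr fun τ _ => ?_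
      simp [Finset.singleton_subset_iff]
    rw [hfil, aux_card_filter_superset σ {j} k (Finset.singleton_subset_iff.mpr hj) (by simpa)]
    simp only [Finset.card_singleton, hj, if_true]
    ring
  · have hfil : (σ.powersetCard k).filter (fun τ => j ∈ τ) = ∅ := by
      refine Finset.filter_eq_empty_iff.mpr fun τ hτ => ?_
      rw [Finset.mem_powersetCard] at hτ
      exact fun hjτ => hj (hτ.1 hjτ)
    rw [hfil]
    simp [hj]

end Split

lemma bsum0 (x y : ℝ) (n : ℕ) :
    ∑ k ∈ Finset.range (n+1), x^k * y^(n-k) * (n.choose k : ℕ) = (x+y)^n :=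
  (add_pow x y n).symm

lemma bsum1 (x y : ℝ) (n : ℕ) (hn : 1 ≤ n) :
    ∑ k ∈ Finset.range (n+1), (k:ℝ) * (x^k * y^(n-k) * (n.choose k : ℕ))
      = n * x * (x+y)^(n-1) := by
  obtain ⟨m, rfl⟩ : ∃ m, n = m + 1 := ⟨n-1, by omega⟩
  rw [Finset.sum_range_succ']
  have hterm : ∀ i ∈ Finset.range (m+1),
      ((i+1:ℕ):ℝ) * (x^(i+1) * y^(m+1-(i+1)) * (((m+1).choose (i+1) : ℕ) : ℝ))
      = ((m+1:ℕ):ℝ) * x * (x^i * y^(m-i) * ((m.choose i : ℕ) : ℝ)) := by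
    intro i _
    have hc : (m+1) * (m.choose i) = ((m+1).choose (i+1)) * (i+1) := Nat.add_one_mul_choose_eq m i
    have hcast : ((m+1:ℕ):ℝ) * ((m.choose i : ℕ):ℝ)
        = (((m+1).choose (i+1) : ℕ):ℝ) * ((i+1:ℕ):ℝ) := by exact_mod_cast congrArg Nat.cast hc
    have hsub : m + 1 - (i+1) = m - i := by omega
    rw [hsub]
    push_cast at hcast ⊢
    linear_combination (-(x^(i+1) * y^(m-i))) * hcast
  rw [Finset.sum_congr rfl hterm, ← Finset.mul_sum, bsum0]
  push_cast [Nat.add_sub_cancel]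
  ring

lemma bsum2 (x y : ℝ) (n : ℕ) (hn : 2 ≤ n) :
    ∑ k ∈ Finset.range (n+1), ((k:ℝ) * ((k:ℝ) - 1)) * (x^k * y^(n-k) * (n.choose k : ℕ))
      = n * (n-1) * x^2 * (x+y)^(n-2) := by
  obtain ⟨m, rfl⟩ : ∃ m, n = m + 2 := ⟨n-2, by omega⟩
  rw [Finset.sum_range_succ', Finset.sum_range_succ']
  have hterm : ∀ i ∈ Finset.range (m+1),
      ((i+1+1:ℕ):ℝ) * (((i+1+1:ℕ):ℝ) - 1) * (x^(i+1+1) * y^(m+2-(i+1+1)) * (((m+2).choose (i+1+1) : ℕ) : ℝ))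
      = ((m+2:ℕ):ℝ) * ((m+1:ℕ):ℝ) * x^2 * (x^i * y^(m-i) * ((m.choose i : ℕ) : ℝ)) := by
    intro i _
    have hc1 : (m+2) * ((m+1).choose (i+1)) = ((m+2).choose (i+2)) * (i+2) :=
      Nat.add_one_mul_choose_eq (m+1) (i+1)
    have hc2 : (m+1) * (m.choose i) = ((m+1).choose (i+1)) * (i+1) := Nat.add_one_mul_choose_eq m i
    have hc : (m+2) * ((m+1) * (m.choose i)) = ((m+2).choose (i+2)) * (i+2) * (i+1) := by
      rw [hc2, ← Nat.mul_assoc, hc1]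
    have hcast : ((m+2:ℕ):ℝ) * (((m+1:ℕ):ℝ) * ((m.choose i : ℕ):ℝ))
        = (((m+2).choose (i+2) : ℕ):ℝ) * ((i+2:ℕ):ℝ) * ((i+1:ℕ):ℝ) := by
      exact_mod_cast congrArg Nat.cast hc
    have hsub : m + 2 - (i+1+1) = m - i := by omega
    rw [hsub]
    push_cast at hcast ⊢
    linear_combination (-(x^(i+2) * y^(m-i))) * hcast
  rw [Finset.sum_congr rfl hterm, ← Finset.mul_sum, bsum0]
  push_cast [Nat.add_sub_cancel]
  ring

lemma tail_bound (δ : ℝ) (hδ0 : 0 ≤ δ) (hδ1 : δ ≤ 1) (n s : ℕ) (hs1 : 1 ≤ s) (hsn : s ≤ n)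
    (hlb : (s:ℝ) ≤ δ * n) (hub : δ * n < s + 1) :
    (s:ℝ)/2 ≤ ∑ k ∈ Finset.range (n+1),
      (δ^k * (1-δ)^(n-k) * ((n.choose k : ℕ):ℝ)) * ((min k s : ℕ):ℝ) := by
  have hq0 : (0:ℝ) ≤ 1 - δ := by linarith
  have hw0 : ∀ k, (0:ℝ) ≤ δ^k * (1-δ)^(n-k) * ((n.choose k : ℕ):ℝ) := fun k =>
    mul_nonneg (mul_nonneg (pow_nonneg hδ0 k) (pow_nonneg hq0 _)) (Nat.cast_nonneg _)
  have hδq : δ + (1 - δ) = 1 := by ring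
  have e0 : ∑ k ∈ Finset.range (n+1), δ^k * (1-δ)^(n-k) * ((n.choose k : ℕ):ℝ) = 1 := by
    rw [bsum0, hδq, one_pow]
  have hn1 : 1 ≤ n := hs1.trans hsn
  have e1 : ∑ k ∈ Finset.range (n+1), (k:ℝ) * (δ^k * (1-δ)^(n-k) * ((n.choose k : ℕ):ℝ))
      = n * δ := by
    rw [bsum1 δ (1-δ) n hn1, hδq, one_pow, mul_one]
  rcases eq_or_lt_of_le hs1 with hs1' | hs2
  · -- s = 1
    obtain rfl : s = 1 := hs1'.symm
    rw [Finset.sum_range_succ'] at e0 ⊢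
    have hterm : ∀ i ∈ Finset.range n,
        (δ^(i+1) * (1-δ)^(n-(i+1)) * ((n.choose (i+1) : ℕ):ℝ)) * ((min (i+1) 1 : ℕ):ℝ)
        = δ^(i+1) * (1-δ)^(n-(i+1)) * ((n.choose (i+1) : ℕ):ℝ) := by
      intro i _
      rw [min_eq_right (Nat.succ_le_succ (Nat.zero_le i))]
      norm_num
    rw [Finset.sum_congr rfl hterm]
    have hw00 : (δ^0 * (1-δ)^(n-0) * ((n.choose 0 : ℕ):ℝ)) * ((min 0 1 : ℕ):ℝ) = 0 := by
      norm_num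
    rw [hw00, add_zero]
    have hq : (1-δ)^n ≤ 1/2 := by
      have h2 : (1:ℝ) + n * δ ≤ (1+δ)^n := one_add_mul_le_pow (by linarith) n
      have h3 : (1-δ)^n * (1+δ)^n ≤ 1 := by
        rw [← mul_pow]
        have h4 : (1-δ)*(1+δ) = 1 - δ^2 := by ring
        rw [h4]
        exact pow_le_one₀ (by nlinarith) (by nlinarith)
      have h5 : (0:ℝ) ≤ (1-δ)^n := pow_nonneg hq0 n
      have h6 : (1:ℝ) ≤ n * δ := by
        have := hlb; push_cast at this; linarith
      nlinarith
    have hw0n : δ^0 * (1-δ)^(n-0) * ((n.choose 0 : ℕ):ℝ) = (1-δ)^n := by norm_num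
    rw [hw0n] at e0
    push_cast
    linarith
  · -- 2 ≤ s
    have hn2 : 2 ≤ n := le_trans hs2 hsn
    have e2 : ∑ k ∈ Finset.range (n+1),
        ((k:ℝ) * ((k:ℝ) - 1)) * (δ^k * (1-δ)^(n-k) * ((n.choose k : ℕ):ℝ))
        = n * (n-1) * δ^2 := by
      rw [bsum2 δ (1-δ) n hn2, hδq, one_pow, mul_one]
    -- second moment about the mean
    have hv : ∑ k ∈ Finset.range (n+1),
        (δ^k * (1-δ)^(n-k) * ((n.choose k : ℕ):ℝ)) * ((n*δ - k)^2)
        = n * δ * (1-δ) := by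
      have hexp : ∀ k ∈ Finset.range (n+1),
          (δ^k * (1-δ)^(n-k) * ((n.choose k : ℕ):ℝ)) * ((n*δ - k)^2)
          = ((n:ℝ)*δ)^2 * (δ^k * (1-δ)^(n-k) * ((n.choose k : ℕ):ℝ))
            - (2*((n:ℝ)*δ) - 1) * ((k:ℝ) * (δ^k * (1-δ)^(n-k) * ((n.choose k : ℕ):ℝ)))
            + ((k:ℝ) * ((k:ℝ) - 1)) * (δ^k * (1-δ)^(n-k) * ((n.choose k : ℕ):ℝ)) := by
        intro k _; ring
      rw [Finset.sum_congr rfl hexp, Finset.sum_add_distrib, Finset.sum_sub_distrib,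
        ← Finset.mul_sum, ← Finset.mul_sum, e0, e1, e2]
      ring
    -- Cauchy–Schwarz: (∑ w |μ - k|)² ≤ ∑ w * ∑ w (μ-k)²
    have hcs := Finset.sum_mul_sq_le_sq_mul_sq (Finset.range (n+1))
      (fun k => Real.sqrt (δ^k * (1-δ)^(n-k) * ((n.choose k : ℕ):ℝ)))
      (fun k => Real.sqrt (δ^k * (1-δ)^(n-k) * ((n.choose k : ℕ):ℝ)) * |n*δ - (k:ℝ)|)
    have hfg : ∀ k ∈ Finset.range (n+1),
        Real.sqrt (δ^k * (1-δ)^(n-k) * ((n.choose k : ℕ):ℝ)) *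
          (Real.sqrt (δ^k * (1-δ)^(n-k) * ((n.choose k : ℕ):ℝ)) * |n*δ - (k:ℝ)|)
        = (δ^k * (1-δ)^(n-k) * ((n.choose k : ℕ):ℝ)) * |n*δ - (k:ℝ)| := by
      intro k _
      rw [← mul_assoc, Real.mul_self_sqrt (hw0 k)]
    have hf2 : ∀ k ∈ Finset.range (n+1),
        (Real.sqrt (δ^k * (1-δ)^(n-k) * ((n.choose k : ℕ):ℝ)))^2
        = δ^k * (1-δ)^(n-k) * ((n.choose k : ℕ):ℝ) := fun k _ => Real.sq_sqrt (hw0 k)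
    have hg2 : ∀ k ∈ Finset.range (n+1),
        (Real.sqrt (δ^k * (1-δ)^(n-k) * ((n.choose k : ℕ):ℝ)) * |n*δ - (k:ℝ)|)^2
        = (δ^k * (1-δ)^(n-k) * ((n.choose k : ℕ):ℝ)) * ((n*δ - k)^2) := by
      intro k _
      rw [mul_pow, Real.sq_sqrt (hw0 k), sq_abs]
    rw [Finset.sum_congr rfl hfg, Finset.sum_congr rfl hf2, Finset.sum_congr rfl hg2,
      e0, hv, one_mul] at hcs
    -- hence ∑ w |μ-k| ≤ s
    set a : ℝ := ∑ k ∈ Finset.range (n+1),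
      (δ^k * (1-δ)^(n-k) * ((n.choose k : ℕ):ℝ)) * |n*δ - (k:ℝ)| with ha
    have ha0 : 0 ≤ a :=
      Finset.sum_nonneg fun k _ => mul_nonneg (hw0 k) (abs_nonneg _)
    have hs2' : (2:ℝ) ≤ (s:ℝ) := by exact_mod_cast hs2
    have havs : a ≤ (s:ℝ) := by
      have h1 : n * δ * (1-δ) ≤ n * δ := by nlinarith [hlb, hs2']
      nlinarith
    -- pointwise lower bound
    have hpt : ∀ k ∈ Finset.range (n+1),
        (δ^k * (1-δ)^(n-k) * ((n.choose k : ℕ):ℝ)) *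
          ((s:ℝ) - ((n*δ - (k:ℝ)) + |n*δ - (k:ℝ)|)/2)
        ≤ (δ^k * (1-δ)^(n-k) * ((n.choose k : ℕ):ℝ)) * ((min k s : ℕ):ℝ) := by
      intro k _
      refine mul_le_mul_of_nonneg_left ?_ (hw0 k)
      rcases le_or_gt k s with hks | hks
      · rw [min_eq_left hks]
        have h1 : (s:ℝ) - k ≤ n*δ - k := by linarith [hlb]
        have h2 : n*δ - k ≤ ((n*δ - (k:ℝ)) + |n*δ - (k:ℝ)|)/2 := by
          have := le_abs_self (n*δ - (k:ℝ)); linarith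
        linarith
      · rw [min_eq_right hks.le]
        have h2 : (0:ℝ) ≤ ((n*δ - (k:ℝ)) + |n*δ - (k:ℝ)|)/2 := by
          have := neg_abs_le (n*δ - (k:ℝ)); linarith
        linarith
    have hsum_lb : ∑ k ∈ Finset.range (n+1),
        (δ^k * (1-δ)^(n-k) * ((n.choose k : ℕ):ℝ)) *
          ((s:ℝ) - ((n*δ - (k:ℝ)) + |n*δ - (k:ℝ)|)/2)
        = (s:ℝ) - (n*δ)/2 + (n*δ)/2 - a/2 := by
      have hexp : ∀ k ∈ Finset.range (n+1),
          (δ^k * (1-δ)^(n-k) * ((n.choose k : ℕ):ℝ)) *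
            ((s:ℝ) - ((n*δ - (k:ℝ)) + |n*δ - (k:ℝ)|)/2)
          = ((s:ℝ) - (n*δ)/2) * (δ^k * (1-δ)^(n-k) * ((n.choose k : ℕ):ℝ))
            + (1/2) * ((k:ℝ) * (δ^k * (1-δ)^(n-k) * ((n.choose k : ℕ):ℝ)))
            - (1/2) * ((δ^k * (1-δ)^(n-k) * ((n.choose k : ℕ):ℝ)) * |n*δ - (k:ℝ)|) := by
        intro k _; ring
      rw [Finset.sum_congr rfl hexp, Finset.sum_sub_distrib, Finset.sum_add_distrib,
        ← Finset.mul_sum, ← Finset.mul_sum, ← Finset.mul_sum, e0, e1, ← ha]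
      ring
    have := Finset.sum_le_sum hpt
    rw [hsum_lb] at this
    linarith

section Claims

variable {m n : ℕ} (N : Matrix (Fin m) (Fin n) ℝ → ℝ)
  (hN_add : ∀ A B : Matrix (Fin m) (Fin n) ℝ, N (A + B) ≤ N A + N B)
  (hN_smul : ∀ (c : ℝ) (A : Matrix (Fin m) (Fin n) ℝ), N (c • A) = |c| * N A)
  (hN_mono : ∀ (A : Matrix (Fin m) (Fin n) ℝ)
      (P : Matrix (Fin m) (Fin m) ℝ) (P' : Matrix (Fin n) (Fin n) ℝ),
      (∀ i j, i ≠ j → P i j = 0) → (∀ i, P i i = 0 ∨ P i i = 1) →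
      (∀ i j, i ≠ j → P' i j = 0) → (∀ i, P' i i = 0 ∨ P' i i = 1) →
      N (P * A * P') ≤ N A)
  (A : Matrix (Fin m) (Fin n) ℝ)

include hN_add hN_smul hN_mono in
lemma claimB (s k : ℕ) (hsk : s ≤ k) (hkn : k ≤ n) :
    ((n.choose k : ℕ):ℝ) * ∑ σ ∈ Finset.powersetCard s (Finset.univ : Finset (Fin n)),
        N (A * Dproj σ)
      ≤ ((n.choose s : ℕ):ℝ) * ∑ σ ∈ Finset.powersetCard k (Finset.univ : Finset (Fin n)),
        N (A * Dproj σ) := by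
  have hdc := aux_double_count s k hsk (fun σ => N (A * Dproj σ))
  simp only [Fintype.card_fin] at hdc
  have hmono : ∑ σ ∈ Finset.powersetCard k (Finset.univ : Finset (Fin n)),
      ∑ τ ∈ σ.powersetCard s, N (A * Dproj τ)
      ≤ ∑ σ ∈ Finset.powersetCard k (Finset.univ : Finset (Fin n)),
        ((k.choose s : ℕ):ℝ) * N (A * Dproj σ) := by
    refine Finset.sum_le_sum fun σ hσ => ?_
    have hσc : σ.card = k := (Finset.mem_powersetCard.mp hσ).2
    calc ∑ τ ∈ σ.powersetCard s, N (A * Dproj τ)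
        ≤ ∑ τ ∈ σ.powersetCard s, N (A * Dproj σ) := by
          refine Finset.sum_le_sum fun τ hτ => ?_
          exact N_mono_subset N hN_mono A (Finset.mem_powersetCard.mp hτ).1
      _ = ((k.choose s : ℕ):ℝ) * N (A * Dproj σ) := by
          rw [Finset.sum_const, Finset.card_powersetCard, hσc, nsmul_eq_mul]
  rw [← Finset.mul_sum] at hmono
  replace hmono := hdc.symm.le.trans hmono
  have hid : (n.choose k) * (k.choose s) = (n.choose s) * ((n-s).choose (k-s)) :=
    Nat.choose_mul hsk
  have hpos : (0:ℝ) < (((n-s).choose (k-s) : ℕ):ℝ) := by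
    exact_mod_cast Nat.choose_pos (by omega)
  rw [← mul_le_mul_iff_of_pos_right hpos]
  calc ((n.choose k : ℕ):ℝ) * (∑ σ ∈ Finset.powersetCard s (Finset.univ : Finset (Fin n)), N (A * Dproj σ))
        * (((n-s).choose (k-s) : ℕ):ℝ)
      = ((n.choose k : ℕ):ℝ) * ((((n-s).choose (k-s) : ℕ):ℝ)
          * ∑ σ ∈ Finset.powersetCard s (Finset.univ : Finset (Fin n)), N (A * Dproj σ)) := by ring
    _ ≤ ((n.choose k : ℕ):ℝ) * (((k.choose s : ℕ):ℝ)
          * ∑ σ ∈ Finset.powersetCard k (Finset.univ : Finset (Fin n)), N (A * Dproj σ)) :=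
        mul_le_mul_of_nonneg_left hmono (Nat.cast_nonneg _)
    _ = (((n.choose k) * (k.choose s) : ℕ):ℝ)
          * ∑ σ ∈ Finset.powersetCard k (Finset.univ : Finset (Fin n)), N (A * Dproj σ) := by
        push_cast; ring
    _ = (((n.choose s) * ((n-s).choose (k-s)) : ℕ):ℝ)
          * ∑ σ ∈ Finset.powersetCard k (Finset.univ : Finset (Fin n)), N (A * Dproj σ) := by rw [hid]
    _ = ((n.choose s : ℕ):ℝ) * (∑ σ ∈ Finset.powersetCard k (Finset.univ : Finset (Fin n)), N (A * Dproj σ))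
          * (((n-s).choose (k-s) : ℕ):ℝ) := by push_cast; ring

include hN_add hN_smul in
lemma claimA (s k : ℕ) (hk1 : 1 ≤ k) (hks : k ≤ s) (hsn : s ≤ n) :
    ((k : ℕ):ℝ) * ((n.choose k : ℕ):ℝ)
        * ∑ σ ∈ Finset.powersetCard s (Finset.univ : Finset (Fin n)), N (A * Dproj σ)
      ≤ ((s : ℕ):ℝ) * ((n.choose s : ℕ):ℝ)
        * ∑ σ ∈ Finset.powersetCard k (Finset.univ : Finset (Fin n)), N (A * Dproj σ) := by
  have hs1 : 1 ≤ s := hk1.trans hks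
  -- per-σ splitting bound
  have hsplit : ∀ σ ∈ Finset.powersetCard s (Finset.univ : Finset (Fin n)),
      (((s-1).choose (k-1) : ℕ):ℝ) * N (A * Dproj σ)
        ≤ ∑ τ ∈ σ.powersetCard k, N (A * Dproj τ) := by
    intro σ hσ
    have hσc : σ.card = s := (Finset.mem_powersetCard.mp hσ).2
    have hid := split_identity A σ k hk1
    rw [hσc] at hid
    calc (((s-1).choose (k-1) : ℕ):ℝ) * N (A * Dproj σ)
        = N ((((s-1).choose (k-1) : ℕ):ℝ) • (A * Dproj σ)) := by
          rw [hN_smul, abs_of_nonneg (Nat.cast_nonneg _)]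
      _ = N (∑ τ ∈ σ.powersetCard k, (A * Dproj τ)) := by rw [hid]
      _ ≤ ∑ τ ∈ σ.powersetCard k, N (A * Dproj τ) := N_sum_le N hN_add hN_smul _ _
  have hsum : (((s-1).choose (k-1) : ℕ):ℝ)
      * ∑ σ ∈ Finset.powersetCard s (Finset.univ : Finset (Fin n)), N (A * Dproj σ)
      ≤ ∑ σ ∈ Finset.powersetCard s (Finset.univ : Finset (Fin n)),
          ∑ τ ∈ σ.powersetCard k, N (A * Dproj τ) := by
    rw [Finset.mul_sum]
    exact Finset.sum_le_sum hsplit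
  have hdc := aux_double_count k s hks (fun σ => N (A * Dproj σ))
  simp only [Fintype.card_fin] at hdc
  replace hsum := hsum.trans hdc.le
  -- nat identities
  have hid1 : s * ((s-1).choose (k-1)) = (s.choose k) * k := by
    obtain ⟨s', rfl⟩ : ∃ s', s = s' + 1 := ⟨s-1, by omega⟩
    obtain ⟨k', rfl⟩ : ∃ k', k = k' + 1 := ⟨k-1, by omega⟩
    simpa using Nat.add_one_mul_choose_eq s' k'
  have hid2 : (n.choose s) * (s.choose k) = (n.choose k) * ((n-k).choose (s-k)) :=
    Nat.choose_mul hks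
  have hidN : k * ((n.choose k) * ((n-k).choose (s-k)))
      = s * ((n.choose s) * ((s-1).choose (k-1))) := by
    calc k * ((n.choose k) * ((n-k).choose (s-k))) = ((n.choose s) * (s.choose k)) * k := by
          rw [← hid2]; ring
      _ = (n.choose s) * ((s.choose k) * k) := by ring
      _ = (n.choose s) * (s * ((s-1).choose (k-1))) := by rw [← hid1]
      _ = s * ((n.choose s) * ((s-1).choose (k-1))) := by ring
  have hpos : (0:ℝ) < (((s-1).choose (k-1) : ℕ):ℝ) := by
    exact_mod_cast Nat.choose_pos (by omega)
  rw [← mul_le_mul_iff_of_pos_right hpos]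
  calc ((k : ℕ):ℝ) * ((n.choose k : ℕ):ℝ)
        * (∑ σ ∈ Finset.powersetCard s (Finset.univ : Finset (Fin n)), N (A * Dproj σ))
        * (((s-1).choose (k-1) : ℕ):ℝ)
      = (((k : ℕ):ℝ) * ((n.choose k : ℕ):ℝ)) * ((((s-1).choose (k-1) : ℕ):ℝ)
          * ∑ σ ∈ Finset.powersetCard s (Finset.univ : Finset (Fin n)), N (A * Dproj σ)) := by ring
    _ ≤ (((k : ℕ):ℝ) * ((n.choose k : ℕ):ℝ)) * ((((n-k).choose (s-k) : ℕ):ℝ)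
          * ∑ σ ∈ Finset.powersetCard k (Finset.univ : Finset (Fin n)), N (A * Dproj σ)) :=
        mul_le_mul_of_nonneg_left hsum
          (mul_nonneg (Nat.cast_nonneg _) (Nat.cast_nonneg _))
    _ = ((k * ((n.choose k) * ((n-k).choose (s-k))) : ℕ):ℝ)
          * ∑ σ ∈ Finset.powersetCard k (Finset.univ : Finset (Fin n)), N (A * Dproj σ) := by
        push_cast; ring
    _ = ((s * ((n.choose s) * ((s-1).choose (k-1))) : ℕ):ℝ)
          * ∑ σ ∈ Finset.powersetCard k (Finset.univ : Finset (Fin n)), N (A * Dproj σ) := by rw [hidN]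
    _ = ((s : ℕ):ℝ) * ((n.choose s : ℕ):ℝ)
          * (∑ σ ∈ Finset.powersetCard k (Finset.univ : Finset (Fin n)), N (A * Dproj σ))
          * (((s-1).choose (k-1) : ℕ):ℝ) := by push_cast; ring

end Claims


/-- Poissonization: for a monotonic matrix norm `N`, the expectation of `N(A·P_σ)` over
a uniformly random subset `σ` of cardinality `s = ⌊δn⌋` is at most twice the expectation
of `N(A·P_σ)` when each index enters `σ` independently with probability `δ`. -/
theorem stmt_18 {m n : ℕ} (hn : 1 ≤ n) (δ : ℝ) (hδ0 : 0 ≤ δ) (hδ1 : δ ≤ 1)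
    (N : Matrix (Fin m) (Fin n) ℝ → ℝ)
    (hN_add : ∀ A B : Matrix (Fin m) (Fin n) ℝ, N (A + B) ≤ N A + N B)
    (hN_smul : ∀ (c : ℝ) (A : Matrix (Fin m) (Fin n) ℝ), N (c • A) = |c| * N A)
    (hN_def : ∀ A : Matrix (Fin m) (Fin n) ℝ, N A = 0 → A = 0)
    (hN_mono : ∀ (A : Matrix (Fin m) (Fin n) ℝ)
      (P : Matrix (Fin m) (Fin m) ℝ) (P' : Matrix (Fin n) (Fin n) ℝ),
      (∀ i j, i ≠ j → P i j = 0) → (∀ i, P i i = 0 ∨ P i i = 1) →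
      (∀ i j, i ≠ j → P' i j = 0) → (∀ i, P' i i = 0 ∨ P' i i = 1) →
      N (P * A * P') ≤ N A)
    (A : Matrix (Fin m) (Fin n) ℝ) :
    (1 / (n.choose ⌊δ * n⌋₊ : ℝ)) *
        ∑ σ ∈ Finset.powersetCard ⌊δ * n⌋₊ (Finset.univ : Finset (Fin n)),
          N (A * Matrix.diagonal fun j => if j ∈ σ then (1 : ℝ) else 0)
      ≤ 2 * ∑ σ ∈ (Finset.univ : Finset (Fin n)).powerset,
          δ ^ σ.card * (1 - δ) ^ (n - σ.card) *
            N (A * Matrix.diagonal fun j => if j ∈ σ then (1 : ℝ) else 0) := by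
  classical
  have hD : ∀ σ : Finset (Fin n),
      (Matrix.diagonal fun j => if j ∈ σ then (1:ℝ) else 0) = Dproj σ := fun _ => rfl
  simp only [hD]
  set s : ℕ := ⌊δ * (n:ℝ)⌋₊ with hsdef
  have hfnn : ∀ σ : Finset (Fin n), 0 ≤ N (A * Dproj σ) := fun σ =>
    N_nonneg N hN_add hN_smul _
  have hsn : s ≤ n := by
    have h1 : δ * (n:ℝ) ≤ (n:ℝ) := by nlinarith [Nat.cast_nonneg (α := ℝ) n]
    calc s ≤ ⌊(n:ℝ)⌋₊ := Nat.floor_le_floor h1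
      _ = n := Nat.floor_natCast n
  -- rewrite RHS as a sum over cardinalities
  rw [Finset.powerset_card_biUnion, Finset.sum_biUnion ((Finset.pairwise_disjoint_powersetCard _).set_pairwise _)]
  simp only [Finset.card_univ, Fintype.card_fin]
  have hinner : ∀ k ∈ Finset.range (n+1),
      ∑ σ ∈ Finset.powersetCard k (Finset.univ : Finset (Fin n)),
        δ ^ σ.card * (1 - δ) ^ (n - σ.card) * N (A * Dproj σ)
      = δ ^ k * (1 - δ) ^ (n - k) *
          ∑ σ ∈ Finset.powersetCard k (Finset.univ : Finset (Fin n)), N (A * Dproj σ) := by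
    intro k _
    rw [Finset.mul_sum]
    refine Finset.sum_congr rfl fun σ hσ => ?_
    rw [(Finset.mem_powersetCard.mp hσ).2]
  rw [Finset.sum_congr rfl hinner]
  have hq0 : (0:ℝ) ≤ 1 - δ := by linarith
  have hwk : ∀ k, (0:ℝ) ≤ δ ^ k * (1 - δ) ^ (n - k) := fun k =>
    mul_nonneg (pow_nonneg hδ0 k) (pow_nonneg hq0 _)
  rcases Nat.eq_zero_or_pos s with hs0 | hs1
  · -- s = 0 : LHS is zero
    rw [hs0]
    have hLHS : ∑ σ ∈ Finset.powersetCard 0 (Finset.univ : Finset (Fin n)),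
        N (A * Dproj σ) = 0 := by
      rw [Finset.powersetCard_zero, Finset.sum_singleton]
      have hDe : Dproj (∅ : Finset (Fin n)) = 0 := by
        unfold Dproj
        simp [Matrix.diagonal_zero]
      rw [hDe, Matrix.mul_zero, N_zero N hN_smul]
    rw [hLHS, mul_zero]
    have : (0:ℝ) ≤ ∑ k ∈ Finset.range (n+1), δ ^ k * (1 - δ) ^ (n - k) *
        ∑ σ ∈ Finset.powersetCard k (Finset.univ : Finset (Fin n)), N (A * Dproj σ) := by
      refine Finset.sum_nonneg fun k _ => mul_nonneg (hwk k)
        (Finset.sum_nonneg fun σ _ => hfnn σ)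
    linarith
  · -- main case : 1 ≤ s
    have hcs0 : (0:ℝ) < ((n.choose s : ℕ):ℝ) := by
      exact_mod_cast Nat.choose_pos hsn
    have hs0' : (0:ℝ) < (s:ℝ) := by exact_mod_cast hs1
    have hlb : (s:ℝ) ≤ δ * n := Nat.floor_le (by positivity)
    have hub : δ * n < s + 1 := Nat.lt_floor_add_one _
    have hTnn : ∀ k, 0 ≤ ∑ σ ∈ Finset.powersetCard k (Finset.univ : Finset (Fin n)),
        N (A * Dproj σ) := fun k => Finset.sum_nonneg fun σ _ => hfnn σ
    -- combined comparison claim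
    have hcomb : ∀ k ∈ Finset.range (n+1),
        ((min k s : ℕ):ℝ) * ((n.choose k : ℕ):ℝ)
            * ∑ σ ∈ Finset.powersetCard s (Finset.univ : Finset (Fin n)), N (A * Dproj σ)
          ≤ ((s : ℕ):ℝ) * ((n.choose s : ℕ):ℝ)
            * ∑ σ ∈ Finset.powersetCard k (Finset.univ : Finset (Fin n)), N (A * Dproj σ) := by
      intro k hk
      rw [Finset.mem_range] at hk
      rcases Nat.eq_zero_or_pos k with hk0 | hk1
      · rw [hk0]
        simp only [Nat.zero_min, Nat.cast_zero, zero_mul]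
        exact mul_nonneg (mul_nonneg hs0'.le hcs0.le) (hTnn 0)
      · rcases le_or_gt k s with hks | hsk
        · rw [min_eq_left hks]
          exact claimA N hN_add hN_smul A s k hk1 hks hsn
        · rw [min_eq_right hsk.le]
          have hB := claimB N hN_add hN_smul hN_mono A s k hsk.le (by omega)
          have := mul_le_mul_of_nonneg_left hB (le_of_lt hs0')
          calc ((s : ℕ):ℝ) * ((n.choose k : ℕ):ℝ)
                * ∑ σ ∈ Finset.powersetCard s (Finset.univ : Finset (Fin n)), N (A * Dproj σ)
              = (s:ℝ) * (((n.choose k : ℕ):ℝ)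
                * ∑ σ ∈ Finset.powersetCard s (Finset.univ : Finset (Fin n)), N (A * Dproj σ)) := by
                ring
            _ ≤ (s:ℝ) * (((n.choose s : ℕ):ℝ)
                * ∑ σ ∈ Finset.powersetCard k (Finset.univ : Finset (Fin n)), N (A * Dproj σ)) :=
                this
            _ = ((s : ℕ):ℝ) * ((n.choose s : ℕ):ℝ)
                * ∑ σ ∈ Finset.powersetCard k (Finset.univ : Finset (Fin n)), N (A * Dproj σ) := by
                ring
    -- per-term inequality
    have hstep1 : ∀ k ∈ Finset.range (n+1),
        ((∑ σ ∈ Finset.powersetCard s (Finset.univ : Finset (Fin n)), N (A * Dproj σ))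
            / ((s:ℝ) * ((n.choose s : ℕ):ℝ)))
          * ((δ ^ k * (1-δ) ^ (n-k) * ((n.choose k : ℕ):ℝ)) * ((min k s : ℕ):ℝ))
        ≤ δ ^ k * (1 - δ) ^ (n - k) *
            ∑ σ ∈ Finset.powersetCard k (Finset.univ : Finset (Fin n)), N (A * Dproj σ) := by
      intro k hk
      have hc := hcomb k hk
      rw [div_mul_eq_mul_div, div_le_iff₀ (mul_pos hs0' hcs0)]
      calc (∑ σ ∈ Finset.powersetCard s (Finset.univ : Finset (Fin n)), N (A * Dproj σ))
            * ((δ ^ k * (1-δ) ^ (n-k) * ((n.choose k : ℕ):ℝ)) * ((min k s : ℕ):ℝ))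
          = (δ ^ k * (1-δ) ^ (n-k)) * (((min k s : ℕ):ℝ) * ((n.choose k : ℕ):ℝ)
              * ∑ σ ∈ Finset.powersetCard s (Finset.univ : Finset (Fin n)), N (A * Dproj σ)) := by
            ring
        _ ≤ (δ ^ k * (1-δ) ^ (n-k)) * (((s : ℕ):ℝ) * ((n.choose s : ℕ):ℝ)
              * ∑ σ ∈ Finset.powersetCard k (Finset.univ : Finset (Fin n)), N (A * Dproj σ)) :=
            mul_le_mul_of_nonneg_left hc (hwk k)
        _ = (δ ^ k * (1 - δ) ^ (n - k) *
              ∑ σ ∈ Finset.powersetCard k (Finset.univ : Finset (Fin n)), N (A * Dproj σ))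
              * ((s:ℝ) * ((n.choose s : ℕ):ℝ)) := by ring
    have hstep2 := Finset.sum_le_sum hstep1
    rw [← Finset.mul_sum] at hstep2
    have htail := tail_bound δ hδ0 hδ1 n s hs1 hsn hlb hub
    have hfac : 0 ≤ (∑ σ ∈ Finset.powersetCard s (Finset.univ : Finset (Fin n)), N (A * Dproj σ))
        / ((s:ℝ) * ((n.choose s : ℕ):ℝ)) := div_nonneg (hTnn s) (mul_pos hs0' hcs0).le
    have hstep3 := mul_le_mul_of_nonneg_left htail hfac
    have hfinal := le_trans hstep3 hstep2
    have heq : (∑ σ ∈ Finset.powersetCard s (Finset.univ : Finset (Fin n)), N (A * Dproj σ))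
        / ((s:ℝ) * ((n.choose s : ℕ):ℝ)) * ((s:ℝ)/2)
        = (1 / ((n.choose s : ℕ):ℝ))
            * (∑ σ ∈ Finset.powersetCard s (Finset.univ : Finset (Fin n)), N (A * Dproj σ)) / 2 := by
      field_simp
    rw [heq] at hfinal
    linarith
end

section
/- Fix δ ∈ [0,1] and let A be a real m×n matrix. Then Σ_{σ ⊆ {1,…,n}} δ^{|σ|}(1−δ)^{n−|σ|} · ‖A·P_σ‖_{∞→2} ≤ √(2δ(1−δ)) · ‖A‖_F + δ · ‖A‖_{∞→2}, where P_σ is the n×n diagonal 0–1 projector whose j-th diagonal entry is 1 exactly when j ∈ σ; that is, the expected (∞,2) norm of the submatrix obtained by keeping each column independently with probability δ is at most √(2δ(1−δ))‖A‖_F + δ‖A‖_{∞→2}. -/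
open Matrix

namespace Stmt19

noncomputable section

/-- closed unit ℓ2 ball -/
def Ball (m : ℕ) : Type := {u : Fin m → ℝ // ∑ i, u i ^ 2 ≤ 1}

instance {m : ℕ} : Nonempty (Ball m) := ⟨⟨fun _ => 0, by simp⟩⟩

variable {m n : ℕ}

def lin (A : Matrix (Fin m) (Fin n) ℝ) (j : Fin n) (u : Ball m) : ℝ :=
  ∑ i, u.1 i * A i j

/-- Cauchy–Schwarz, abs/sqrt form. -/
lemma cs_abs {k : ℕ} (f g : Fin k → ℝ) :
    |∑ i, f i * g i| ≤ Real.sqrt (∑ i, f i ^ 2) * Real.sqrt (∑ i, g i ^ 2) := by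
  have h := Finset.sum_mul_sq_le_sq_mul_sq Finset.univ f g
  have := Real.sqrt_le_sqrt h
  rwa [Real.sqrt_sq_eq_abs, Real.sqrt_mul (by positivity)] at this

lemma lin_bound (A : Matrix (Fin m) (Fin n) ℝ) (j : Fin n) (u : Ball m) :
    |lin A j u| ≤ Real.sqrt (∑ i, A i j ^ 2) := by
  have h := cs_abs (fun i => u.1 i) (fun i => A i j)
  have hu : Real.sqrt (∑ i, u.1 i ^ 2) ≤ 1 :=
    (Real.sqrt_le_sqrt u.2).trans (le_of_eq Real.sqrt_one)
  calc |lin A j u| ≤ Real.sqrt (∑ i, u.1 i ^ 2) * Real.sqrt (∑ i, A i j ^ 2) := h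
    _ ≤ 1 * Real.sqrt (∑ i, A i j ^ 2) := by
        apply mul_le_mul_of_nonneg_right hu (Real.sqrt_nonneg _)
    _ = _ := one_mul _

def gf (A : Matrix (Fin m) (Fin n) ℝ) (t : Finset (Fin n)) (j : Fin n) (u : Ball m) : ℝ :=
  if j ∈ t then lin A j u else |lin A j u|

lemma gf_bound (A : Matrix (Fin m) (Fin n) ℝ) (t : Finset (Fin n)) (j : Fin n) (u : Ball m) :
    |gf A t j u| ≤ Real.sqrt (∑ i, A i j ^ 2) := by
  unfold gf
  split
  · exact lin_bound A j u
  · rw [abs_abs]; exact lin_bound A j u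

def Ff (A : Matrix (Fin m) (Fin n) ℝ) (t : Finset (Fin n))
    (p : Finset (Fin n) × Finset (Fin n)) (u : Ball m) : ℝ :=
  (∑ j ∈ p.1 \ p.2, gf A t j u) - ∑ j ∈ p.2 \ p.1, gf A t j u

def Kc (A : Matrix (Fin m) (Fin n) ℝ) : ℝ := ∑ j, Real.sqrt (∑ i, A i j ^ 2)

lemma sum_gf_le (A : Matrix (Fin m) (Fin n) ℝ) (t s : Finset (Fin n)) (u : Ball m) :
    ∑ j ∈ s, gf A t j u ≤ Kc A := by
  calc ∑ j ∈ s, gf A t j u ≤ ∑ j ∈ s, Real.sqrt (∑ i, A i j ^ 2) := by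
        apply Finset.sum_le_sum
        intro j _
        exact (le_abs_self _).trans (gf_bound A t j u)
    _ ≤ Kc A := by
        apply Finset.sum_le_sum_of_subset_of_nonneg (Finset.subset_univ s)
        intro j _ _
        exact Real.sqrt_nonneg _

lemma sum_gf_ge (A : Matrix (Fin m) (Fin n) ℝ) (t s : Finset (Fin n)) (u : Ball m) :
    -(Kc A) ≤ ∑ j ∈ s, gf A t j u := by
  have h1 : -(Kc A) ≤ -∑ j ∈ s, |gf A t j u| := by
    simp only [neg_le_neg_iff]
    calc ∑ j ∈ s, |gf A t j u| ≤ ∑ j ∈ s, Real.sqrt (∑ i, A i j ^ 2) :=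
          Finset.sum_le_sum fun j _ => gf_bound A t j u
      _ ≤ Kc A := Finset.sum_le_sum_of_subset_of_nonneg (Finset.subset_univ s)
          fun j _ _ => Real.sqrt_nonneg _
  calc -(Kc A) ≤ -∑ j ∈ s, |gf A t j u| := h1
    _ ≤ ∑ j ∈ s, gf A t j u := by
        rw [neg_le]
        exact (neg_le_abs _).trans (Finset.abs_sum_le_sum_abs _ _)

lemma Ff_le (A : Matrix (Fin m) (Fin n) ℝ) (t : Finset (Fin n))
    (p : Finset (Fin n) × Finset (Fin n)) (u : Ball m) :
    Ff A t p u ≤ 2 * Kc A := by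
  have h1 := sum_gf_le A t (p.1 \ p.2) u
  have h2 := sum_gf_ge A t (p.2 \ p.1) u
  unfold Ff; linarith

lemma bddFf (A : Matrix (Fin m) (Fin n) ℝ) (t : Finset (Fin n))
    (p : Finset (Fin n) × Finset (Fin n)) :
    BddAbove (Set.range (Ff A t p)) := by
  refine ⟨2 * Kc A, ?_⟩
  rintro x ⟨u, rfl⟩
  exact Ff_le A t p u

def V (A : Matrix (Fin m) (Fin n) ℝ) (t : Finset (Fin n))
    (p : Finset (Fin n) × Finset (Fin n)) : ℝ :=
  ⨆ u : Ball m, Ff A t p u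

/-- the key convexity/contraction swap inequality for sups -/
lemma key_sup {ι : Type*} [Nonempty ι] (a f : ι → ℝ)
    (h1 : BddAbove (Set.range fun s => a s + f s))
    (h2 : BddAbove (Set.range fun s => a s - f s)) :
    (⨆ s, a s + |f s|) + (⨆ s, a s - |f s|)
      ≤ (⨆ s, a s + f s) + (⨆ s, a s - f s) := by
  set R1 := ⨆ s, a s + f s with hR1
  set R2 := ⨆ s, a s - f s with hR2
  have key : ∀ s t : ι, (a s + |f s|) + (a t - |f t|) ≤ R1 + R2 := by
    intro s t
    rcases le_total (f t) (f s) with h | h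
    · have e1 : a s + f s ≤ R1 := le_ciSup h1 s
      have e2 : a t - f t ≤ R2 := le_ciSup h2 t
      have e3 : |f s| - |f t| ≤ f s - f t :=
        (abs_sub_abs_le_abs_sub _ _).trans (le_of_eq (abs_of_nonneg (by linarith)))
      linarith
    · have e1 : a t + f t ≤ R1 := le_ciSup h1 t
      have e2 : a s - f s ≤ R2 := le_ciSup h2 s
      have e3 : |f s| - |f t| ≤ f t - f s := by
        refine (abs_sub_abs_le_abs_sub _ _).trans ?_
        rw [abs_sub_comm]
        exact le_of_eq (abs_of_nonneg (by linarith))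
      linarith
  have step1 : (⨆ s, a s + |f s|) ≤ (R1 + R2) - (⨆ t, a t - |f t|) := by
    apply ciSup_le
    intro s
    rw [le_sub_iff_add_le, add_comm]
    rw [← le_sub_iff_add_le]
    apply ciSup_le
    intro t
    linarith [key s t]
  linarith

end

end Stmt19
namespace Stmt19
noncomputable section
variable {m n : ℕ}

def wgt (δ : ℝ) (σ : Finset (Fin n)) : ℝ := δ ^ σ.card * (1 - δ) ^ (n - σ.card)

lemma wgt_nonneg {δ : ℝ} (hδ0 : 0 ≤ δ) (hδ1 : δ ≤ 1) (σ : Finset (Fin n)) :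
    0 ≤ wgt δ σ := by
  unfold wgt
  have : (0:ℝ) ≤ 1 - δ := by linarith
  positivity

lemma wgt_prod (δ : ℝ) (σ : Finset (Fin n)) :
    wgt δ σ = ∏ j : Fin n, (if j ∈ σ then δ else 1 - δ) := by
  have hu : (Finset.univ : Finset (Fin n)) = σ ∪ (Finset.univ \ σ) := by
    rw [Finset.union_sdiff_of_subset (Finset.subset_univ σ)]
  rw [hu, Finset.prod_union (Finset.disjoint_sdiff)]
  rw [Finset.prod_congr rfl (fun j hj => if_pos hj),
      Finset.prod_congr rfl (fun j hj => if_neg (Finset.mem_sdiff.mp hj).2)]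
  rw [Finset.prod_const, Finset.prod_const,
      Finset.card_sdiff_of_subset (Finset.subset_univ σ), Finset.card_univ, Fintype.card_fin]
  rfl

lemma mom (δ : ℝ) (t : Finset (Fin n)) :
    ∑ σ : Finset (Fin n), wgt δ σ * (if t ⊆ σ then (1:ℝ) else 0) = δ ^ t.card := by
  have step : ∀ σ : Finset (Fin n), wgt δ σ * (if t ⊆ σ then (1:ℝ) else 0)
      = (∏ j ∈ σ, δ) * ∏ j ∈ Finset.univ \ σ, (if j ∈ t then (0:ℝ) else 1 - δ) := by
    intro σ
    by_cases h : t ⊆ σ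
    · rw [if_pos h, mul_one, wgt]
      rw [Finset.prod_congr rfl (fun j hj => if_neg (fun hjt => (Finset.mem_sdiff.mp hj).2 (h hjt)))]
      rw [Finset.prod_const, Finset.prod_const,
          Finset.card_sdiff_of_subset (Finset.subset_univ σ), Finset.card_univ, Fintype.card_fin]
    · rw [if_neg h, mul_zero]
      obtain ⟨j, hjt, hjσ⟩ := Finset.not_subset.mp h
      have hz : (∏ j ∈ Finset.univ \ σ, if j ∈ t then (0:ℝ) else 1 - δ) = 0 :=
        Finset.prod_eq_zero (Finset.mem_sdiff.mpr ⟨Finset.mem_univ j, hjσ⟩) (if_pos hjt)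
      rw [hz, mul_zero]
  rw [Finset.sum_congr rfl (fun σ _ => step σ)]
  rw [← Finset.powerset_univ, ← Finset.prod_add (fun _ => δ)
      (fun j => if j ∈ t then (0:ℝ) else 1 - δ) Finset.univ]
  have : ∀ j : Fin n, (δ + if j ∈ t then (0:ℝ) else 1 - δ) = if j ∈ t then δ else 1 := by
    intro j; split <;> ring
  rw [Finset.prod_congr rfl (fun j _ => this j)]
  rw [Finset.prod_ite_mem, Finset.univ_inter, Finset.prod_const]

lemma mom_one (δ : ℝ) : ∑ σ : Finset (Fin n), wgt δ σ = 1 := by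
  have := mom (n := n) δ ∅
  simp only [Finset.empty_subset, if_true, mul_one, Finset.card_empty, pow_zero] at this
  exact this

lemma mom_single (δ : ℝ) (j : Fin n) :
    ∑ σ : Finset (Fin n), wgt δ σ * (if j ∈ σ then (1:ℝ) else 0) = δ := by
  have := mom (n := n) δ {j}
  simp only [Finset.singleton_subset_iff, Finset.card_singleton, pow_one] at this
  exact this

lemma mom_pair (δ : ℝ) (j k : Fin n) (hjk : j ≠ k) :
    ∑ σ : Finset (Fin n), wgt δ σ * ((if j ∈ σ then (1:ℝ) else 0) * (if k ∈ σ then (1:ℝ) else 0))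
      = δ ^ 2 := by
  have := mom (n := n) δ {j, k}
  rw [Finset.card_insert_of_notMem (by simpa using hjk), Finset.card_singleton] at this
  rw [← this]
  apply Finset.sum_congr rfl
  intro σ _
  congr 1
  by_cases hj : j ∈ σ <;> by_cases hk : k ∈ σ <;>
    simp [Finset.insert_subset_iff, hj, hk]

end
end Stmt19
namespace Stmt19
open symmDiff
noncomputable section
variable {m n : ℕ}

abbrev FP (n : ℕ) := Finset (Fin n) × Finset (Fin n)

def W (δ : ℝ) (p : FP n) : ℝ := wgt δ p.1 * wgt δ p.2

lemma W_nonneg {δ : ℝ} (hδ0 : 0 ≤ δ) (hδ1 : δ ≤ 1) (p : FP n) : 0 ≤ W δ p :=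
  mul_nonneg (wgt_nonneg hδ0 hδ1 _) (wgt_nonneg hδ0 hδ1 _)

def e (k : Fin n) (p : FP n) : FP n := (p.1 ∆ {k}, p.2 ∆ {k})

lemma mem_sd_self (σ : Finset (Fin n)) (k : Fin n) : k ∈ σ ∆ {k} ↔ k ∉ σ := by
  simp [Finset.mem_symmDiff]

lemma mem_sd_other (σ : Finset (Fin n)) {j k : Fin n} (hjk : j ≠ k) :
    j ∈ σ ∆ {k} ↔ j ∈ σ := by
  simp [Finset.mem_symmDiff, hjk]

lemma einv (k : Fin n) : Function.Involutive (e (n := n) k) := by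
  intro p
  simp [e, symmDiff_symmDiff_cancel_right]

lemma W_e {δ : ℝ} (k : Fin n) (p : FP n) (hp : ¬(k ∈ p.1 ↔ k ∈ p.2)) :
    W δ (e k p) = W δ p := by
  have hW : ∀ q : FP n, W δ q
      = ((if k ∈ q.1 then δ else 1 - δ) * (if k ∈ q.2 then δ else 1 - δ))
        * ∏ j ∈ Finset.univ.erase k,
            ((if j ∈ q.1 then δ else 1 - δ) * (if j ∈ q.2 then δ else 1 - δ)) := by
    intro q
    rw [W, wgt_prod, wgt_prod, ← Finset.prod_mul_distrib]
    exact (Finset.mul_prod_erase _ _ (Finset.mem_univ k)).symm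
  rw [hW, hW]
  have htail : ∏ j ∈ Finset.univ.erase k,
      ((if j ∈ (e k p).1 then δ else 1 - δ) * (if j ∈ (e k p).2 then δ else 1 - δ))
      = ∏ j ∈ Finset.univ.erase k,
      ((if j ∈ p.1 then δ else 1 - δ) * (if j ∈ p.2 then δ else 1 - δ)) := by
    apply Finset.prod_congr rfl
    intro j hj
    have hjk : j ≠ k := (Finset.mem_erase.mp hj).1
    have m1 : (j ∈ (e k p).1) = (j ∈ p.1) := propext (mem_sd_other p.1 hjk)
    have m2 : (j ∈ (e k p).2) = (j ∈ p.2) := propext (mem_sd_other p.2 hjk)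
    simp only [m1, m2]
  rw [htail]
  congr 1
  have h1 : (k ∈ (e k p).1) ↔ k ∉ p.1 := mem_sd_self p.1 k
  have h2 : (k ∈ (e k p).2) ↔ k ∉ p.2 := mem_sd_self p.2 k
  by_cases hk1 : k ∈ p.1 <;> by_cases hk2 : k ∈ p.2
  · exact absurd (iff_of_true hk1 hk2) hp
  · rw [if_pos hk1, if_neg hk2, if_neg (by simp [h1, hk1]), if_pos (by simp [h2, hk2])]
    ring
  · rw [if_neg hk1, if_pos hk2, if_pos (by simp [h1, hk1]), if_neg (by simp [h2, hk2])]
    ring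
  · exact absurd (iff_of_false hk1 hk2) hp

lemma keyV' (A : Matrix (Fin m) (Fin n) ℝ) (t : Finset (Fin n)) (k : Fin n)
    (σ σ' : Finset (Fin n)) (hk : k ∉ t) (hk1 : k ∈ σ) (hk2 : k ∉ σ') :
    V A t (σ, σ') + V A t (e k (σ, σ'))
      ≤ V A (insert k t) (σ, σ') + V A (insert k t) (e k (σ, σ')) := by
  have hkP : k ∈ σ \ σ' := Finset.mem_sdiff.mpr ⟨hk1, hk2⟩
  have hkM : k ∉ σ' \ σ := fun h => (Finset.mem_sdiff.mp h).2 hk1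
  have hP' : (σ ∆ {k}) \ (σ' ∆ {k}) = (σ \ σ').erase k := by
    ext j
    by_cases hj : j = k
    · subst hj; simp [Finset.mem_symmDiff, hk1, hk2]
    · simp only [Finset.mem_sdiff, Finset.mem_erase, Finset.mem_symmDiff,
        Finset.mem_singleton, hj]
      tauto
  have hM' : (σ' ∆ {k}) \ (σ ∆ {k}) = insert k (σ' \ σ) := by
    ext j
    by_cases hj : j = k
    · subst hj; simp [Finset.mem_symmDiff, hk1, hk2]
    · simp only [Finset.mem_sdiff, Finset.mem_insert, Finset.mem_symmDiff,
        Finset.mem_singleton, hj, false_or]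
      tauto
  set a : Ball m → ℝ := fun u => (∑ j ∈ (σ \ σ').erase k, gf A t j u) - ∑ j ∈ σ' \ σ, gf A t j u
    with ha
  set f : Ball m → ℝ := fun u => lin A k u with hf
  have gfk : ∀ u, gf A t k u = |f u| := by
    intro u; simp [gf, hk, hf]
  have gfk' : ∀ u, gf A (insert k t) k u = f u := by
    intro u; simp [gf, hf]
  have gfcong : ∀ (j : Fin n), j ≠ k → ∀ u, gf A (insert k t) j u = gf A t j u := by
    intro j hj u; simp [gf, Finset.mem_insert, hj]
  have F1 : Ff A t (σ, σ') = fun u => a u + |f u| := by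
    funext u
    show (∑ j ∈ σ \ σ', gf A t j u) - (∑ j ∈ σ' \ σ, gf A t j u) = _
    rw [← Finset.add_sum_erase _ _ hkP, gfk]
    ring
  have F2 : Ff A t (e k (σ, σ')) = fun u => a u - |f u| := by
    funext u
    show (∑ j ∈ (σ ∆ {k}) \ (σ' ∆ {k}), gf A t j u)
        - (∑ j ∈ (σ' ∆ {k}) \ (σ ∆ {k}), gf A t j u) = _
    rw [hP', hM', Finset.sum_insert hkM, gfk]
    ring
  have F3 : Ff A (insert k t) (σ, σ') = fun u => a u + f u := by
    funext u
    show (∑ j ∈ σ \ σ', gf A (insert k t) j u) - (∑ j ∈ σ' \ σ, gf A (insert k t) j u) = _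
    rw [← Finset.add_sum_erase _ _ hkP, gfk']
    rw [Finset.sum_congr rfl (fun j hj => gfcong j (Finset.mem_erase.mp hj).1 u),
        Finset.sum_congr rfl (fun j hj => gfcong j (fun h => hkM (h ▸ hj)) u)]
    ring
  have F4 : Ff A (insert k t) (e k (σ, σ')) = fun u => a u - f u := by
    funext u
    show (∑ j ∈ (σ ∆ {k}) \ (σ' ∆ {k}), gf A (insert k t) j u)
        - (∑ j ∈ (σ' ∆ {k}) \ (σ ∆ {k}), gf A (insert k t) j u) = _
    rw [hP', hM', Finset.sum_insert hkM, gfk']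
    rw [Finset.sum_congr rfl (fun j hj => gfcong j (Finset.mem_erase.mp hj).1 u),
        Finset.sum_congr rfl (fun j hj => gfcong j (fun h => hkM (h ▸ hj)) u)]
    ring
  have b1 : BddAbove (Set.range fun u => a u + f u) := F3 ▸ bddFf A (insert k t) (σ, σ')
  have b2 : BddAbove (Set.range fun u => a u - f u) := F4 ▸ bddFf A (insert k t) (e k (σ, σ'))
  have e1 : V A t (σ, σ') = ⨆ u, a u + |f u| := congrArg iSup F1
  have e2 : V A t (e k (σ, σ')) = ⨆ u, a u - |f u| := congrArg iSup F2
  have e3 : V A (insert k t) (σ, σ') = ⨆ u, a u + f u := congrArg iSup F3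
  have e4 : V A (insert k t) (e k (σ, σ')) = ⨆ u, a u - f u := congrArg iSup F4
  rw [e1, e2, e3, e4]
  exact key_sup a f b1 b2

lemma keyV (A : Matrix (Fin m) (Fin n) ℝ) (t : Finset (Fin n)) (k : Fin n)
    (p : FP n) (hk : k ∉ t) (hp : ¬(k ∈ p.1 ↔ k ∈ p.2)) :
    V A t p + V A t (e k p) ≤ V A (insert k t) p + V A (insert k t) (e k p) := by
  obtain ⟨σ, σ'⟩ := p
  by_cases hk1 : k ∈ σ
  · have hk2 : k ∉ σ' := fun h => hp (iff_of_true hk1 h)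
    exact keyV' A t k σ σ' hk hk1 hk2
  · have hk2 : k ∈ σ' := by
      by_contra h
      exact hp (iff_of_false hk1 h)
    have h1 : k ∈ σ ∆ {k} := (mem_sd_self σ k).mpr hk1
    have h2 : k ∉ σ' ∆ {k} := by
      rw [mem_sd_self]; simp [hk2]
    have := keyV' A t k (σ ∆ {k}) (σ' ∆ {k}) hk h1 h2
    have hee : e k (σ ∆ {k}, σ' ∆ {k}) = (σ, σ') := einv k (σ, σ')
    rw [hee] at this
    have hE : e k (σ, σ') = (σ ∆ {k}, σ' ∆ {k}) := rfl
    rw [hE]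
    linarith

end
end Stmt19
namespace Stmt19
open symmDiff
noncomputable section
variable {m n : ℕ}

lemma contr_step (A : Matrix (Fin m) (Fin n) ℝ) {δ : ℝ} (hδ0 : 0 ≤ δ) (hδ1 : δ ≤ 1)
    (t : Finset (Fin n)) (k : Fin n) (hk : k ∉ t) :
    ∑ p : FP n, W δ p * V A t p ≤ ∑ p : FP n, W δ p * V A (insert k t) p := by
  classical
  set t' := insert k t with ht'
  set cond : FP n → Prop := fun p => (k ∈ p.1 ↔ k ∈ p.2) with hcond
  rw [← Finset.sum_filter_add_sum_filter_not Finset.univ cond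
        (fun p => W δ p * V A t p),
      ← Finset.sum_filter_add_sum_filter_not Finset.univ cond
        (fun p => W δ p * V A t' p)]
  have hsame : ∑ p ∈ Finset.univ.filter cond, W δ p * V A t p
      = ∑ p ∈ Finset.univ.filter cond, W δ p * V A t' p := by
    apply Finset.sum_congr rfl
    intro p hp
    have hc : cond p := (Finset.mem_filter.mp hp).2
    have hFf : Ff A t p = Ff A t' p := by
      funext u
      have hgf : ∀ j ∈ p.1 \ p.2, gf A t j u = gf A t' j u := by
        intro j hj
        have hjk : j ≠ k := by
          rintro rfl
          obtain ⟨h1, h2⟩ := Finset.mem_sdiff.mp hj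
          exact h2 (hc.mp h1)
        simp [gf, ht', Finset.mem_insert, hjk]
      have hgf2 : ∀ j ∈ p.2 \ p.1, gf A t j u = gf A t' j u := by
        intro j hj
        have hjk : j ≠ k := by
          rintro rfl
          obtain ⟨h1, h2⟩ := Finset.mem_sdiff.mp hj
          exact h2 (hc.mpr h1)
        simp [gf, ht', Finset.mem_insert, hjk]
      unfold Ff
      rw [Finset.sum_congr rfl hgf, Finset.sum_congr rfl hgf2]
    have : V A t p = V A t' p := congrArg iSup hFf
    rw [this]
  rw [hsame]
  apply add_le_add_right
  -- now the filtered ¬cond part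
  set s₁ := Finset.univ.filter (fun p => ¬ cond p) with hs₁
  have hmem : ∀ p : FP n, p ∈ s₁ ↔ e k p ∈ s₁ := by
    intro p
    simp only [hs₁, Finset.mem_filter, Finset.mem_univ, true_and]
    have h1 : (k ∈ (e k p).1) ↔ k ∉ p.1 := mem_sd_self p.1 k
    have h2 : (k ∈ (e k p).2) ↔ k ∉ p.2 := mem_sd_self p.2 k
    show ¬(k ∈ p.1 ↔ k ∈ p.2) ↔ ¬(k ∈ (e k p).1 ↔ k ∈ (e k p).2)
    rw [h1, h2]
    tauto
  have refl_sum : ∀ H : FP n → ℝ, ∑ p ∈ s₁, H (e k p) = ∑ p ∈ s₁, H p := by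
    intro H
    exact Finset.sum_bijective (e k) (einv (n := n) k).bijective (fun p => hmem p)
      (fun p _ => rfl)
  have key : ∀ p ∈ s₁,
      W δ p * V A t p + W δ (e k p) * V A t (e k p)
        ≤ W δ p * V A t' p + W δ (e k p) * V A t' (e k p) := by
    intro p hp
    have hc : ¬ cond p := (Finset.mem_filter.mp hp).2
    rw [W_e k p hc, ← mul_add, ← mul_add]
    exact mul_le_mul_of_nonneg_left (keyV A t k p hk hc) (W_nonneg hδ0 hδ1 p)
  have calc1 : ∑ p ∈ s₁, W δ p * V A t p
      = (∑ p ∈ s₁, (W δ p * V A t p + W δ (e k p) * V A t (e k p))) / 2 := by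
    rw [Finset.sum_add_distrib, refl_sum (fun p => W δ p * V A t p)]
    ring
  have calc2 : ∑ p ∈ s₁, W δ p * V A t' p
      = (∑ p ∈ s₁, (W δ p * V A t' p + W δ (e k p) * V A t' (e k p))) / 2 := by
    rw [Finset.sum_add_distrib, refl_sum (fun p => W δ p * V A t' p)]
    ring
  rw [calc1, calc2]
  apply div_le_div_of_nonneg_right ?_ (by norm_num)
  · exact Finset.sum_le_sum key

lemma contr (A : Matrix (Fin m) (Fin n) ℝ) {δ : ℝ} (hδ0 : 0 ≤ δ) (hδ1 : δ ≤ 1)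
    (t : Finset (Fin n)) :
    ∑ p : FP n, W δ p * V A ∅ p ≤ ∑ p : FP n, W δ p * V A t p := by
  classical
  induction t using Finset.induction_on with
  | empty => exact le_refl _
  | insert _ _ hk ih => exact ih.trans (contr_step A hδ0 hδ1 _ _ hk)

end
end Stmt19
namespace Stmt19
noncomputable section
variable {m n : ℕ}

def S (A : Matrix (Fin m) (Fin n) ℝ) (σ : Finset (Fin n)) : ℝ :=
  ⨆ u : Ball m, ∑ j ∈ σ, |lin A j u|

lemma bddS (A : Matrix (Fin m) (Fin n) ℝ) (σ : Finset (Fin n)) :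
    BddAbove (Set.range fun u : Ball m => ∑ j ∈ σ, |lin A j u|) := by
  refine ⟨Kc A, ?_⟩
  rintro x ⟨u, rfl⟩
  calc ∑ j ∈ σ, |lin A j u| ≤ ∑ j ∈ σ, Real.sqrt (∑ i, A i j ^ 2) :=
        Finset.sum_le_sum fun j _ => lin_bound A j u
    _ ≤ Kc A := Finset.sum_le_sum_of_subset_of_nonneg (Finset.subset_univ σ)
        fun j _ _ => Real.sqrt_nonneg _

lemma lin_zero (A : Matrix (Fin m) (Fin n) ℝ) (j : Fin n) :
    lin A j ⟨fun _ => 0, by simp⟩ = 0 := by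
  unfold lin; simp

lemma S_nonneg (A : Matrix (Fin m) (Fin n) ℝ) (σ : Finset (Fin n)) : 0 ≤ S A σ := by
  have h := le_ciSup (bddS A σ) (⟨fun _ => 0, by simp⟩ : Ball m)
  calc (0:ℝ) = ∑ j ∈ σ, |lin A j (⟨fun _ => 0, by simp⟩ : Ball m)| := by
        rw [Finset.sum_congr rfl (fun j _ => by rw [lin_zero A j, abs_zero])]
        simp
    _ ≤ S A σ := h

lemma sdiff_decomp (c : Fin n → ℝ) (σ σ' : Finset (Fin n)) :
    (∑ j ∈ σ, c j) - ∑ j ∈ σ', c j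
      = (∑ j ∈ σ \ σ', c j) - ∑ j ∈ σ' \ σ, c j := by
  have h1 : ∑ j ∈ σ, c j = (∑ j ∈ σ \ σ', c j) + ∑ j ∈ σ ∩ σ', c j := by
    rw [← Finset.sum_union (Finset.disjoint_sdiff_inter σ σ'), Finset.sdiff_union_inter]
  have h2 : ∑ j ∈ σ', c j = (∑ j ∈ σ' \ σ, c j) + ∑ j ∈ σ' ∩ σ, c j := by
    rw [← Finset.sum_union (Finset.disjoint_sdiff_inter σ' σ), Finset.sdiff_union_inter]
  have h3 : σ' ∩ σ = σ ∩ σ' := Finset.inter_comm σ' σ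
  rw [h1, h2, h3]; ring

lemma norm_le_S (A : Matrix (Fin m) (Fin n) ℝ) (σ : Finset (Fin n)) :
    normInf2 (A * Matrix.diagonal fun j => if j ∈ σ then (1:ℝ) else 0) ≤ S A σ := by
  unfold normInf2
  rcases isEmpty_or_nonempty {x : Fin n → ℝ // linfnorm x = 1} with hE | hNE
  · rw [Real.iSup_of_isEmpty]
    exact S_nonneg A σ
  · apply ciSup_le
    intro x
    set v : Fin m → ℝ :=
      (A * Matrix.diagonal fun j => if j ∈ σ then (1:ℝ) else 0).mulVec x.1 with hv
    have hvi : ∀ i, v i = ∑ j ∈ σ, A i j * x.1 j := by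
      intro i
      rw [hv]
      show ∑ j, (A * Matrix.diagonal fun j => if j ∈ σ then (1:ℝ) else 0) i j * x.1 j = _
      rw [Finset.sum_congr rfl fun j _ => by
        rw [Matrix.mul_diagonal]]
      have : ∀ j : Fin n, A i j * (if j ∈ σ then (1:ℝ) else 0) * x.1 j
          = if j ∈ σ then A i j * x.1 j else 0 := by
        intro j; split <;> ring
      rw [Finset.sum_congr rfl fun j _ => this j, Finset.sum_ite_mem, Finset.univ_inter]
    have hx : ∀ j, |x.1 j| ≤ 1 := by
      intro j
      have h := le_ciSup (Finite.bddAbove_range fun i => |x.1 i|) j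
      have h2 : linfnorm x.1 = 1 := x.2
      rw [linfnorm] at h2
      rw [h2] at h
      exact h
    by_cases hz : ∑ i, v i ^ 2 = 0
    · show Real.sqrt (∑ i, v i ^ 2) ≤ _
      rw [hz, Real.sqrt_zero]
      exact S_nonneg A σ
    · have hnn : (0:ℝ) ≤ ∑ i, v i ^ 2 := Finset.sum_nonneg fun i _ => sq_nonneg _
      have hpos : 0 < ∑ i, v i ^ 2 := lt_of_le_of_ne hnn (Ne.symm hz)
      set L := Real.sqrt (∑ i, v i ^ 2) with hL
      have hLpos : 0 < L := Real.sqrt_pos.mpr hpos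
      have hBall : ∑ i, (v i / L) ^ 2 ≤ 1 := by
        have : ∀ i, (v i / L) ^ 2 = v i ^ 2 / L ^ 2 := fun i => div_pow _ _ _
        rw [Finset.sum_congr rfl fun i _ => this i, ← Finset.sum_div]
        rw [hL, Real.sq_sqrt hnn, div_self hz]
      set u : Ball m := ⟨fun i => v i / L, hBall⟩ with hu
      have key : Real.sqrt (∑ i, v i ^ 2) = ∑ i, u.1 i * v i := by
        have : ∀ i, u.1 i * v i = v i ^ 2 / L := by
          intro i
          show v i / L * v i = v i ^ 2 / L
          ring
        rw [Finset.sum_congr rfl fun i _ => this i, ← Finset.sum_div, hL,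
            Real.div_sqrt]
      have key2 : ∑ i, u.1 i * v i = ∑ j ∈ σ, x.1 j * lin A j u := by
        rw [Finset.sum_congr rfl fun i (_ : i ∈ Finset.univ) => by
          rw [hvi i, Finset.mul_sum]]
        rw [Finset.sum_comm]
        apply Finset.sum_congr rfl
        intro j _
        rw [lin, Finset.mul_sum]
        apply Finset.sum_congr rfl
        intro i _
        ring
      have key3 : ∑ j ∈ σ, x.1 j * lin A j u ≤ ∑ j ∈ σ, |lin A j u| := by
        apply Finset.sum_le_sum
        intro j _
        calc x.1 j * lin A j u ≤ |x.1 j * lin A j u| := le_abs_self _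
          _ = |x.1 j| * |lin A j u| := abs_mul _ _
          _ ≤ 1 * |lin A j u| := mul_le_mul_of_nonneg_right (hx j) (abs_nonneg _)
          _ = |lin A j u| := one_mul _
      show Real.sqrt (∑ i, v i ^ 2) ≤ _
      rw [key, key2]
      exact key3.trans (le_ciSup (bddS A σ) u)

lemma bddNormRange (A : Matrix (Fin m) (Fin n) ℝ) :
    BddAbove (Set.range fun x : {x : Fin n → ℝ // linfnorm x = 1} =>
      l2norm (A.mulVec x.1)) := by
  refine ⟨Real.sqrt (∑ i, (∑ j, |A i j|) ^ 2), ?_⟩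
  rintro y ⟨x, rfl⟩
  have hx : ∀ j, |x.1 j| ≤ 1 := by
    intro j
    have h := le_ciSup (Finite.bddAbove_range fun i => |x.1 i|) j
    have h2 : linfnorm x.1 = 1 := x.2
    rw [linfnorm] at h2
    rw [h2] at h
    exact h
  unfold l2norm
  apply Real.sqrt_le_sqrt
  apply Finset.sum_le_sum
  intro i _
  have habs : |A.mulVec x.1 i| ≤ ∑ j, |A i j| := by
    calc |A.mulVec x.1 i| = |∑ j, A i j * x.1 j| := rfl
      _ ≤ ∑ j, |A i j * x.1 j| := Finset.abs_sum_le_sum_abs _ _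
      _ ≤ ∑ j, |A i j| := by
          apply Finset.sum_le_sum
          intro j _
          rw [abs_mul]
          calc |A i j| * |x.1 j| ≤ |A i j| * 1 :=
                mul_le_mul_of_nonneg_left (hx j) (abs_nonneg _)
            _ = |A i j| := mul_one _
  calc A.mulVec x.1 i ^ 2 = |A.mulVec x.1 i| ^ 2 := (sq_abs _).symm
    _ ≤ (∑ j, |A i j|) ^ 2 := by
        apply pow_le_pow_left₀ (abs_nonneg _) habs

lemma S_univ_le (A : Matrix (Fin m) (Fin n) ℝ) :
    S A Finset.univ ≤ normInf2 A := by
  apply ciSup_le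
  intro u
  rcases isEmpty_or_nonempty (Fin n) with hE | hNE
  · have h0 : ∑ j ∈ (Finset.univ : Finset (Fin n)), |lin A j u| = 0 := by
      simp
    rw [h0]
    have hE2 : IsEmpty {x : Fin n → ℝ // linfnorm x = 1} := by
      constructor
      rintro ⟨x, hx⟩
      rw [linfnorm, Real.iSup_of_isEmpty] at hx
      exact one_ne_zero hx.symm
    unfold normInf2
    rw [Real.iSup_of_isEmpty]
  · set xs : Fin n → ℝ := fun j => if 0 ≤ lin A j u then 1 else -1 with hxs
    have habs : ∀ j, |xs j| = 1 := by
      intro j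
      rw [hxs]
      dsimp only
      split
      · exact abs_one
      · rw [abs_neg, abs_one]
    have hlinf : linfnorm xs = 1 := by
      rw [linfnorm]
      have : (fun j => |xs j|) = fun _ => (1:ℝ) := funext habs
      rw [this, ciSup_const]
    have e1 : ∑ j, |lin A j u| = ∑ j, xs j * lin A j u := by
      apply Finset.sum_congr rfl
      intro j _
      rw [hxs]
      dsimp only
      split
      · rename_i h
        rw [abs_of_nonneg h, one_mul]
      · rename_i h
        rw [abs_of_neg (lt_of_not_ge h)]
        ring
    have e2 : ∑ j, xs j * lin A j u = ∑ i, u.1 i * A.mulVec xs i := by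
      have h1 : ∀ j, xs j * lin A j u = ∑ i, u.1 i * (A i j * xs j) := by
        intro j
        rw [lin, Finset.mul_sum]
        apply Finset.sum_congr rfl
        intro i _
        ring
      rw [Finset.sum_congr rfl fun j (_ : j ∈ Finset.univ) => h1 j, Finset.sum_comm]
      apply Finset.sum_congr rfl
      intro i _
      rw [show A.mulVec xs i = ∑ j, A i j * xs j from rfl, Finset.mul_sum]
    have e3 : ∑ i, u.1 i * A.mulVec xs i ≤ l2norm (A.mulVec xs) := by
      calc ∑ i, u.1 i * A.mulVec xs i ≤ |∑ i, u.1 i * A.mulVec xs i| := le_abs_self _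
        _ ≤ Real.sqrt (∑ i, u.1 i ^ 2) * Real.sqrt (∑ i, A.mulVec xs i ^ 2) := cs_abs _ _
        _ ≤ 1 * Real.sqrt (∑ i, A.mulVec xs i ^ 2) := by
            apply mul_le_mul_of_nonneg_right
              ((Real.sqrt_le_sqrt u.2).trans (le_of_eq Real.sqrt_one)) (Real.sqrt_nonneg _)
        _ = l2norm (A.mulVec xs) := one_mul _
    rw [e1, e2]
    exact e3.trans (le_ciSup (bddNormRange A) ⟨xs, hlinf⟩)

lemma per_sigma (A : Matrix (Fin m) (Fin n) ℝ) {δ : ℝ} (hδ0 : 0 ≤ δ) (hδ1 : δ ≤ 1)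
    (σ : Finset (Fin n)) :
    normInf2 (A * Matrix.diagonal fun j => if j ∈ σ then (1:ℝ) else 0)
      ≤ δ * normInf2 A + ∑ σ' : Finset (Fin n), wgt δ σ' * V A ∅ (σ, σ') := by
  refine (norm_le_S A σ).trans ?_
  apply ciSup_le
  intro u
  have h2 : ∑ σ' : Finset (Fin n), wgt δ σ' * ∑ j ∈ σ', |lin A j u|
      = δ * ∑ j, |lin A j u| := by
    have hexp : ∀ σ' : Finset (Fin n), wgt δ σ' * ∑ j ∈ σ', |lin A j u|
        = ∑ j, (wgt δ σ' * (if j ∈ σ' then (1:ℝ) else 0)) * |lin A j u| := by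
      intro σ'
      have : ∑ j ∈ σ', |lin A j u| = ∑ j, (if j ∈ σ' then (1:ℝ) else 0) * |lin A j u| := by
        rw [Finset.sum_congr rfl (fun j (_ : j ∈ Finset.univ) => by
          rw [ite_mul, one_mul, zero_mul]), Finset.sum_ite_mem, Finset.univ_inter]
      rw [this, Finset.mul_sum]
      apply Finset.sum_congr rfl
      intro j _
      ring
    rw [Finset.sum_congr rfl fun σ' (_ : σ' ∈ Finset.univ) => hexp σ', Finset.sum_comm]
    rw [Finset.mul_sum]
    apply Finset.sum_congr rfl
    intro j _
    rw [← Finset.sum_mul, mom_single δ j]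
  have expand : ∑ j ∈ σ, |lin A j u| = δ * (∑ j, |lin A j u|)
      + ∑ σ' : Finset (Fin n), wgt δ σ' *
          ((∑ j ∈ σ, |lin A j u|) - ∑ j ∈ σ', |lin A j u|) := by
    have h1 : ∑ σ' : Finset (Fin n), wgt δ σ' *
        ((∑ j ∈ σ, |lin A j u|) - ∑ j ∈ σ', |lin A j u|)
        = (∑ σ' : Finset (Fin n), wgt δ σ') * (∑ j ∈ σ, |lin A j u|)
          - ∑ σ' : Finset (Fin n), wgt δ σ' * ∑ j ∈ σ', |lin A j u| := by
      rw [Finset.sum_congr rfl fun σ' (_ : σ' ∈ Finset.univ) => mul_sub (wgt δ σ') _ _,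
          Finset.sum_sub_distrib, Finset.sum_mul]
    rw [h1, mom_one, one_mul, h2]
    ring
  rw [expand]
  apply add_le_add
  · apply mul_le_mul_of_nonneg_left _ hδ0
    exact (le_ciSup (bddS A Finset.univ) u).trans (S_univ_le A)
  · apply Finset.sum_le_sum
    intro σ' _
    apply mul_le_mul_of_nonneg_left _ (wgt_nonneg hδ0 hδ1 σ')
    have hFf : (∑ j ∈ σ, |lin A j u|) - ∑ j ∈ σ', |lin A j u| = Ff A ∅ (σ, σ') u := by
      have hgfe : ∀ (s : Finset (Fin n)),
          ∑ j ∈ s, gf A (∅ : Finset (Fin n)) j u = ∑ j ∈ s, |lin A j u| :=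
        fun s => Finset.sum_congr rfl (fun j _ => by simp [gf])
      rw [sdiff_decomp (fun j => |lin A j u|) σ σ']
      unfold Ff
      rw [hgfe, hgfe]
    rw [hFf]
    exact le_ciSup (bddFf A ∅ (σ, σ')) u

end
end Stmt19
namespace Stmt19
noncomputable section
variable {m n : ℕ}

def rfun (p : FP n) (j : Fin n) : ℝ :=
  (if j ∈ p.1 then (1:ℝ) else 0) - (if j ∈ p.2 then (1:ℝ) else 0)

def Lf (A : Matrix (Fin m) (Fin n) ℝ) (p : FP n) : ℝ :=
  Real.sqrt (∑ i, (∑ j, rfun p j * A i j) ^ 2)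

lemma Lf_nonneg (A : Matrix (Fin m) (Fin n) ℝ) (p : FP n) : 0 ≤ Lf A p :=
  Real.sqrt_nonneg _

lemma V_univ_le_L (A : Matrix (Fin m) (Fin n) ℝ) (p : FP n) :
    V A Finset.univ p ≤ Lf A p := by
  apply ciSup_le
  intro u
  have h1 : Ff A Finset.univ p u = ∑ j, rfun p j * lin A j u := by
    unfold Ff
    have hg : ∀ (s : Finset (Fin n)), ∑ j ∈ s, gf A Finset.univ j u = ∑ j ∈ s, lin A j u :=
      fun s => Finset.sum_congr rfl (fun j _ => by simp [gf])
    rw [hg, hg]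
    have e1 : ∑ j, rfun p j * lin A j u
        = (∑ j ∈ p.1, lin A j u) - ∑ j ∈ p.2, lin A j u := by
      have : ∀ j : Fin n, rfun p j * lin A j u
          = (if j ∈ p.1 then lin A j u else 0) - (if j ∈ p.2 then lin A j u else 0) := by
        intro j
        unfold rfun
        split <;> split <;> ring
      rw [Finset.sum_congr rfl fun j (_ : j ∈ Finset.univ) => this j,
          Finset.sum_sub_distrib, Finset.sum_ite_mem, Finset.sum_ite_mem,
          Finset.univ_inter, Finset.univ_inter]
    rw [e1, sdiff_decomp (fun j => lin A j u) p.1 p.2]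
  rw [h1]
  have h2 : ∑ j, rfun p j * lin A j u = ∑ i, u.1 i * (∑ j, rfun p j * A i j) := by
    have ha : ∀ j, rfun p j * lin A j u = ∑ i, u.1 i * (rfun p j * A i j) := by
      intro j
      rw [lin, Finset.mul_sum]
      apply Finset.sum_congr rfl
      intro i _
      ring
    rw [Finset.sum_congr rfl fun j (_ : j ∈ Finset.univ) => ha j, Finset.sum_comm]
    apply Finset.sum_congr rfl
    intro i _
    rw [Finset.mul_sum]
  rw [h2]
  calc ∑ i, u.1 i * (∑ j, rfun p j * A i j)
      ≤ |∑ i, u.1 i * (∑ j, rfun p j * A i j)| := le_abs_self _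
    _ ≤ Real.sqrt (∑ i, u.1 i ^ 2) * Real.sqrt (∑ i, (∑ j, rfun p j * A i j) ^ 2) :=
        cs_abs _ _
    _ ≤ 1 * Real.sqrt (∑ i, (∑ j, rfun p j * A i j) ^ 2) :=
        mul_le_mul_of_nonneg_right
          ((Real.sqrt_le_sqrt u.2).trans (le_of_eq Real.sqrt_one)) (Real.sqrt_nonneg _)
    _ = Lf A p := one_mul _

lemma momr {δ : ℝ} (j j' : Fin n) :
    ∑ p : FP n, W δ p * (rfun p j * rfun p j')
      = if j = j' then 2 * δ * (1 - δ) else 0 := by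
  classical
  have fact : ∀ (F G : Finset (Fin n) → ℝ),
      ∑ p : FP n, F p.1 * G p.2 = (∑ σ, F σ) * (∑ σ, G σ) := by
    intro F G
    rw [Finset.sum_mul_sum]
    exact Fintype.sum_prod_type _
  have expand : ∀ p : FP n, W δ p * (rfun p j * rfun p j')
      = (wgt δ p.1 * ((if j ∈ p.1 then (1:ℝ) else 0) * (if j' ∈ p.1 then (1:ℝ) else 0)))
          * wgt δ p.2
        - (wgt δ p.1 * (if j ∈ p.1 then (1:ℝ) else 0))
          * (wgt δ p.2 * (if j' ∈ p.2 then (1:ℝ) else 0))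
        - (wgt δ p.1 * (if j' ∈ p.1 then (1:ℝ) else 0))
          * (wgt δ p.2 * (if j ∈ p.2 then (1:ℝ) else 0))
        + wgt δ p.1
          * (wgt δ p.2 * ((if j ∈ p.2 then (1:ℝ) else 0) * (if j' ∈ p.2 then (1:ℝ) else 0))) := by
    intro p
    unfold W rfun
    ring
  rw [Finset.sum_congr rfl fun p (_ : p ∈ Finset.univ) => expand p]
  rw [Finset.sum_add_distrib, Finset.sum_sub_distrib, Finset.sum_sub_distrib]
  rw [fact (fun σ => wgt δ σ * ((if j ∈ σ then (1:ℝ) else 0) * (if j' ∈ σ then (1:ℝ) else 0)))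
        (fun σ => wgt δ σ),
      fact (fun σ => wgt δ σ * (if j ∈ σ then (1:ℝ) else 0))
        (fun σ => wgt δ σ * (if j' ∈ σ then (1:ℝ) else 0)),
      fact (fun σ => wgt δ σ * (if j' ∈ σ then (1:ℝ) else 0))
        (fun σ => wgt δ σ * (if j ∈ σ then (1:ℝ) else 0)),
      fact (fun σ => wgt δ σ)
        (fun σ => wgt δ σ * ((if j ∈ σ then (1:ℝ) else 0) * (if j' ∈ σ then (1:ℝ) else 0)))]
  rw [mom_one, mom_single, mom_single]
  by_cases hjj : j = j'
  · subst hjj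
    have hsq : ∀ σ : Finset (Fin n),
        wgt δ σ * ((if j ∈ σ then (1:ℝ) else 0) * (if j ∈ σ then (1:ℝ) else 0))
          = wgt δ σ * (if j ∈ σ then (1:ℝ) else 0) := by
      intro σ; split <;> ring
    rw [Finset.sum_congr rfl fun σ (_ : σ ∈ Finset.univ) => hsq σ, mom_single]
    rw [if_pos rfl]
    ring
  · rw [mom_pair δ j j' hjj]
    rw [if_neg hjj]
    ring

end
end Stmt19

open Stmt19

/-- Random column selection reduces the (∞,2) norm: keeping each column independently
with probability `δ`, the expected (∞,2) norm is at most
`√(2δ(1−δ))·‖A‖_F + δ·‖A‖_{∞→2}`. -/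
theorem stmt_19 {m n : ℕ} (δ : ℝ) (hδ0 : 0 ≤ δ) (hδ1 : δ ≤ 1)
    (A : Matrix (Fin m) (Fin n) ℝ) :
    ∑ σ ∈ (Finset.univ : Finset (Fin n)).powerset,
        δ ^ σ.card * (1 - δ) ^ (n - σ.card) *
          normInf2 (A * Matrix.diagonal fun j => if j ∈ σ then (1 : ℝ) else 0)
      ≤ Real.sqrt (2 * δ * (1 - δ)) * froNorm A + δ * normInf2 A := by
  classical
  rw [Finset.powerset_univ]
  have hμ0 : (0:ℝ) ≤ 2 * δ * (1 - δ) := by nlinarith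
  have step1 : ∑ σ : Finset (Fin n), wgt δ σ *
        normInf2 (A * Matrix.diagonal fun j => if j ∈ σ then (1:ℝ) else 0)
      ≤ δ * normInf2 A + ∑ p : FP n, W δ p * V A ∅ p := by
    calc ∑ σ : Finset (Fin n), wgt δ σ *
          normInf2 (A * Matrix.diagonal fun j => if j ∈ σ then (1:ℝ) else 0)
        ≤ ∑ σ : Finset (Fin n), wgt δ σ *
            (δ * normInf2 A + ∑ σ' : Finset (Fin n), wgt δ σ' * V A ∅ (σ, σ')) := by
          apply Finset.sum_le_sum
          intro σ _
          exact mul_le_mul_of_nonneg_left (per_sigma A hδ0 hδ1 σ) (wgt_nonneg hδ0 hδ1 σ)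
      _ = (∑ σ : Finset (Fin n), wgt δ σ) * (δ * normInf2 A)
          + ∑ σ : Finset (Fin n), ∑ σ' : Finset (Fin n),
              wgt δ σ * (wgt δ σ' * V A ∅ (σ, σ')) := by
          rw [Finset.sum_congr rfl fun σ (_ : σ ∈ Finset.univ) => mul_add (wgt δ σ) _ _,
              Finset.sum_add_distrib, ← Finset.sum_mul]
          congr 1
          exact Finset.sum_congr rfl fun σ _ => Finset.mul_sum _ _ _
      _ = δ * normInf2 A + ∑ p : FP n, W δ p * V A ∅ p := by
          rw [mom_one, one_mul, Fintype.sum_prod_type]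
          congr 1
          apply Finset.sum_congr rfl
          intro σ _
          apply Finset.sum_congr rfl
          intro σ' _
          have h : W δ (σ, σ') = wgt δ σ * wgt δ σ' := rfl
          rw [h]
          ring
  have step2 := contr A hδ0 hδ1 (Finset.univ : Finset (Fin n))
  have step3 : ∑ p : FP n, W δ p * V A Finset.univ p ≤ ∑ p : FP n, W δ p * Lf A p :=
    Finset.sum_le_sum fun p _ =>
      mul_le_mul_of_nonneg_left (V_univ_le_L A p) (W_nonneg hδ0 hδ1 p)
  have hW1 : ∑ p : FP n, W δ p = 1 := by
    rw [Fintype.sum_prod_type]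
    have hσ : ∀ σ : Finset (Fin n), ∑ σ' : Finset (Fin n), W δ (σ, σ') = wgt δ σ := by
      intro σ
      have h : ∀ σ' : Finset (Fin n), W δ (σ, σ') = wgt δ σ * wgt δ σ' := fun _ => rfl
      rw [Finset.sum_congr rfl fun σ' (_ : σ' ∈ Finset.univ) => h σ', ← Finset.mul_sum,
          mom_one, mul_one]
    rw [Finset.sum_congr rfl fun σ (_ : σ ∈ Finset.univ) => hσ σ, mom_one]
  have step4 : ∑ p : FP n, W δ p * Lf A p
      ≤ Real.sqrt (∑ p : FP n, W δ p * (Lf A p) ^ 2) := by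
    have cs := Finset.sum_mul_sq_le_sq_mul_sq Finset.univ
      (fun p : FP n => Real.sqrt (W δ p)) (fun p => Real.sqrt (W δ p) * Lf A p)
    have e1 : ∀ p : FP n,
        Real.sqrt (W δ p) * (Real.sqrt (W δ p) * Lf A p) = W δ p * Lf A p := by
      intro p
      rw [← mul_assoc, Real.mul_self_sqrt (W_nonneg hδ0 hδ1 p)]
    have e2 : ∀ p : FP n, Real.sqrt (W δ p) ^ 2 = W δ p :=
      fun p => Real.sq_sqrt (W_nonneg hδ0 hδ1 p)
    have e3 : ∀ p : FP n, (Real.sqrt (W δ p) * Lf A p) ^ 2 = W δ p * (Lf A p) ^ 2 := by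
      intro p
      rw [mul_pow, e2]
    rw [Finset.sum_congr rfl fun p (_ : p ∈ Finset.univ) => e1 p,
        Finset.sum_congr rfl fun p (_ : p ∈ Finset.univ) => e2 p,
        Finset.sum_congr rfl fun p (_ : p ∈ Finset.univ) => e3 p, hW1, one_mul] at cs
    have hnn : 0 ≤ ∑ p : FP n, W δ p * Lf A p :=
      Finset.sum_nonneg fun p _ => mul_nonneg (W_nonneg hδ0 hδ1 p) (Lf_nonneg A p)
    calc ∑ p : FP n, W δ p * Lf A p
        = Real.sqrt ((∑ p : FP n, W δ p * Lf A p) ^ 2) := (Real.sqrt_sq hnn).symm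
      _ ≤ Real.sqrt (∑ p : FP n, W δ p * (Lf A p) ^ 2) := Real.sqrt_le_sqrt cs
  have step5 : ∑ p : FP n, W δ p * (Lf A p) ^ 2
      = (2 * δ * (1 - δ)) * ∑ i, ∑ j, A i j ^ 2 := by
    have hL2 : ∀ p : FP n, (Lf A p) ^ 2 = ∑ i, (∑ j, rfun p j * A i j) ^ 2 :=
      fun p => Real.sq_sqrt (Finset.sum_nonneg fun i _ => sq_nonneg _)
    have e1 : ∀ p : FP n, W δ p * (Lf A p) ^ 2
        = ∑ i, ∑ j, ∑ j', W δ p * (rfun p j * rfun p j') * (A i j * A i j') := by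
      intro p
      rw [hL2, Finset.mul_sum]
      apply Finset.sum_congr rfl
      intro i _
      rw [sq, Finset.sum_mul_sum, Finset.mul_sum]
      apply Finset.sum_congr rfl
      intro j _
      rw [Finset.mul_sum]
      apply Finset.sum_congr rfl
      intro j' _
      ring
    rw [Finset.sum_congr rfl fun p (_ : p ∈ Finset.univ) => e1 p]
    rw [Finset.sum_comm]
    have inner : ∀ i, ∑ p : FP n, ∑ j, ∑ j',
        W δ p * (rfun p j * rfun p j') * (A i j * A i j')
        = (2 * δ * (1 - δ)) * ∑ j, A i j ^ 2 := by
      intro i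
      rw [Finset.sum_comm]
      have perj : ∀ j : Fin n, ∑ p : FP n, ∑ j',
          W δ p * (rfun p j * rfun p j') * (A i j * A i j')
          = (2 * δ * (1 - δ)) * A i j ^ 2 := by
        intro j
        rw [Finset.sum_comm]
        have perj' : ∀ j' : Fin n, ∑ p : FP n,
            W δ p * (rfun p j * rfun p j') * (A i j * A i j')
            = (if j = j' then 2 * δ * (1 - δ) else 0) * (A i j * A i j') := by
          intro j'
          rw [← Finset.sum_mul]
          rw [momr j j']
        rw [Finset.sum_congr rfl fun j' (_ : j' ∈ Finset.univ) => perj' j']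
        have hite : ∀ j' : Fin n, (if j = j' then 2 * δ * (1 - δ) else 0) * (A i j * A i j')
            = if j = j' then (2 * δ * (1 - δ)) * (A i j * A i j') else 0 := by
          intro j'; split <;> ring
        rw [Finset.sum_congr rfl fun j' (_ : j' ∈ Finset.univ) => hite j',
            Finset.sum_ite_eq Finset.univ j
              (fun j' => (2 * δ * (1 - δ)) * (A i j * A i j')),
            if_pos (Finset.mem_univ j)]
        ring
      rw [Finset.sum_congr rfl fun j (_ : j ∈ Finset.univ) => perj j, ← Finset.mul_sum]
    rw [Finset.sum_congr rfl fun i (_ : i ∈ Finset.univ) => inner i, ← Finset.mul_sum]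
  have hfro : Real.sqrt ((2 * δ * (1 - δ)) * ∑ i, ∑ j, A i j ^ 2)
      = Real.sqrt (2 * δ * (1 - δ)) * froNorm A := by
    rw [Real.sqrt_mul hμ0, froNorm]
  calc ∑ σ : Finset (Fin n), δ ^ σ.card * (1 - δ) ^ (n - σ.card) *
        normInf2 (A * Matrix.diagonal fun j => if j ∈ σ then (1:ℝ) else 0)
      ≤ δ * normInf2 A + ∑ p : FP n, W δ p * V A ∅ p := step1
    _ ≤ δ * normInf2 A + ∑ p : FP n, W δ p * V A Finset.univ p := by
        exact add_le_add_right step2 _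
    _ ≤ δ * normInf2 A + ∑ p : FP n, W δ p * Lf A p := add_le_add_right step3 _
    _ ≤ δ * normInf2 A + Real.sqrt (∑ p : FP n, W δ p * (Lf A p) ^ 2) :=
        add_le_add_right step4 _
    _ = δ * normInf2 A + Real.sqrt (2 * δ * (1 - δ)) * froNorm A := by
        rw [step5, hfro]
    _ = Real.sqrt (2 * δ * (1 - δ)) * froNorm A + δ * normInf2 A := add_comm _ _
end
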